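/- arXiv:2602.23517 — 4 statements merged into one kernel-verified Lean document; each statement's English description precedes it below -/
import Mathlib

section
/- Let G be a graph with parameters (r2, r3) and let e = uv be an edge with edge K3-degree k = |N(u) ∩ N(v)|. Then 2·r3 ≤ (r2 − k − 1)·(r2 − 2) + k·(k + 1). -/
open SimpleGraph Finset

/-- The K3-degree of a vertex: the number of triangles (3-cliques) of `G` containing `v`. -/
noncomputable def K3deg {V : Type*} (G : SimpleGraph V) (v : V) : ℕ :=
  {t : Finset V | G.IsNClique 3 t ∧ v ∈ t}.ncard

/-- The degree of a vertex, as the cardinality of its open neighbourhood. -/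
noncomputable def deg {V : Type*} (G : SimpleGraph V) (v : V) : ℕ :=
  (G.neighborSet v).ncard

/-- `G` has parameters `(r2, r3)`: every vertex has degree `r2` and K3-degree `r3`. -/
def HasParams {V : Type*} (G : SimpleGraph V) (r2 r3 : ℕ) : Prop :=
  ∀ v : V, deg G v = r2 ∧ K3deg G v = r3

lemma adj_sum_comm {V : Type*} (G : SimpleGraph V) [DecidableRel G.Adj] (A B : Finset V) :
    ∑ x ∈ A, (B.filter (G.Adj x)).card = ∑ y ∈ B, (A.filter (G.Adj y)).card := by
  simp only [Finset.card_filter]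
  rw [Finset.sum_comm]
  exact Finset.sum_congr rfl fun y _ => Finset.sum_congr rfl fun x _ => by
    simp only [G.adj_comm]

lemma pair_card {V : Type*} [DecidableEq V] (G : SimpleGraph V) [DecidableRel G.Adj]
    (S : Finset V) :
    ((S ×ˢ S).filter fun p => G.Adj p.1 p.2).card
      = ∑ x ∈ S, (S.filter fun y => G.Adj x y).card := by
  rw [Finset.card_eq_sum_card_fiberwise
      (f := Prod.fst) (t := S)
      (fun p hp => (Finset.mem_product.1 (Finset.mem_filter.1 hp).1).1)]
  refine Finset.sum_congr rfl fun x hx => ?_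
  have : ((S ×ˢ S).filter fun p => G.Adj p.1 p.2).filter (fun p => p.1 = x)
      = {x} ×ˢ (S.filter fun y => G.Adj x y) := by
    ext ⟨a, b⟩
    simp only [Finset.mem_filter, Finset.mem_product, Finset.mem_singleton]
    constructor
    · rintro ⟨⟨⟨ha, hb⟩, hadj⟩, rfl⟩; exact ⟨rfl, hb, hadj⟩
    · rintro ⟨rfl, hb, hadj⟩; exact ⟨⟨⟨hx, hb⟩, hadj⟩, rfl⟩
  rw [this, Finset.card_product, Finset.card_singleton, one_mul]

lemma two_mul_K3deg {V : Type*} [Fintype V] [DecidableEq V] (G : SimpleGraph V)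
    [DecidableRel G.Adj] (u : V) :
    2 * K3deg G u
      = ((G.neighborFinset u ×ˢ G.neighborFinset u).filter fun p => G.Adj p.1 p.2).card := by
  classical
  have hK : K3deg G u = (Set.toFinset {t : Finset V | G.IsNClique 3 t ∧ u ∈ t}).card := by
    rw [K3deg, Set.ncard_eq_toFinset_card']
  set T := Set.toFinset {t : Finset V | G.IsNClique 3 t ∧ u ∈ t} with hT
  have hmap : ∀ p ∈ (G.neighborFinset u ×ˢ G.neighborFinset u).filter
      (fun p => G.Adj p.1 p.2), insert u {p.1, p.2} ∈ T := by
    rintro ⟨a, b⟩ hp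
    rw [Finset.mem_filter, Finset.mem_product] at hp
    obtain ⟨⟨ha, hb⟩, hab⟩ := hp
    rw [SimpleGraph.mem_neighborFinset] at ha hb
    rw [hT, Set.mem_toFinset]
    exact ⟨(G.is3Clique_triple_iff).mpr ⟨ha, hb, hab⟩, Finset.mem_insert_self _ _⟩
  rw [Finset.card_eq_sum_card_fiberwise hmap]
  have hfib : ∀ t ∈ T,
      (((G.neighborFinset u ×ˢ G.neighborFinset u).filter fun p => G.Adj p.1 p.2).filter
        fun p => insert u {p.1, p.2} = t).card = 2 := by
    intro t ht
    rw [hT, Set.mem_toFinset] at ht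
    obtain ⟨hcl, hut⟩ := ht
    have hcard : (t.erase u).card = 2 := by
      rw [Finset.card_erase_of_mem hut, hcl.2]
    obtain ⟨x, y, hxy, hexy⟩ := Finset.card_eq_two.1 hcard
    have hxt : x ∈ t := Finset.mem_of_mem_erase (hexy ▸ Finset.mem_insert_self x {y})
    have hyt : y ∈ t := Finset.mem_of_mem_erase (hexy ▸ Finset.mem_insert_of_mem (Finset.mem_singleton_self y))
    have hxu : x ≠ u := Finset.ne_of_mem_erase (hexy ▸ Finset.mem_insert_self x {y})
    have hyu : y ≠ u := Finset.ne_of_mem_erase (hexy ▸ Finset.mem_insert_of_mem (Finset.mem_singleton_self y))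
    have hux : G.Adj u x := hcl.1 hut hxt (Ne.symm hxu)
    have huy : G.Adj u y := hcl.1 hut hyt (Ne.symm hyu)
    have haxy : G.Adj x y := hcl.1 hxt hyt hxy
    have htins : insert u ({x, y} : Finset V) = t := by
      rw [← hexy, Finset.insert_erase hut]
    have hset : (((G.neighborFinset u ×ˢ G.neighborFinset u).filter fun p => G.Adj p.1 p.2).filter
        fun p => insert u {p.1, p.2} = t) = ({(x, y), (y, x)} : Finset (V × V)) := by
      ext ⟨a, b⟩
      simp only [Finset.mem_filter, Finset.mem_product, SimpleGraph.mem_neighborFinset,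
        Finset.mem_insert, Finset.mem_singleton, Prod.mk.injEq]
      constructor
      · rintro ⟨⟨⟨ha, hb⟩, hab⟩, heq⟩
        have hat : a ∈ t.erase u := by
          rw [← heq]
          exact Finset.mem_erase.2 ⟨ha.ne', Finset.mem_insert_of_mem (Finset.mem_insert_self a {b})⟩
        have hbt : b ∈ t.erase u := by
          rw [← heq]
          exact Finset.mem_erase.2 ⟨hb.ne', Finset.mem_insert_of_mem
            (Finset.mem_insert_of_mem (Finset.mem_singleton_self b))⟩
        rw [hexy, Finset.mem_insert, Finset.mem_singleton] at hat hbt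
        have hne : a ≠ b := hab.ne
        rcases hat with rfl | rfl <;> rcases hbt with rfl | rfl
        · exact absurd rfl hne
        · exact Or.inl ⟨rfl, rfl⟩
        · exact Or.inr ⟨rfl, rfl⟩
        · exact absurd rfl hne
      · rintro (⟨rfl, rfl⟩ | ⟨rfl, rfl⟩)
        · exact ⟨⟨⟨hux, huy⟩, haxy⟩, htins⟩
        · refine ⟨⟨⟨huy, hux⟩, haxy.symm⟩, ?_⟩
          rw [Finset.pair_comm a b]; exact htins
    rw [hset]
    rw [Finset.card_insert_of_notMem, Finset.card_singleton]
    simp only [Finset.mem_singleton, Prod.mk.injEq, not_and]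
    intro h'; exact absurd h' hxy
  rw [Finset.sum_congr rfl hfib, Finset.sum_const, smul_eq_mul, hK, mul_comm]

lemma oneSide {V : Type*} [Fintype V] [DecidableEq V] (G : SimpleGraph V)
    [DecidableRel G.Adj] (u v : V) (huv : G.Adj u v) :
    2 * K3deg G u ≤ 2 * (G.neighborFinset u ∩ G.neighborFinset v).card
      + ((∑ w ∈ G.neighborFinset u ∩ G.neighborFinset v,
            (((G.neighborFinset u ∩ G.neighborFinset v)).filter (G.Adj w)).card)
        + 2 * (∑ w ∈ G.neighborFinset u ∩ G.neighborFinset v,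
            ((G.neighborFinset u \ insert v (G.neighborFinset v)).filter (G.Adj w)).card)
        + ∑ x ∈ G.neighborFinset u \ insert v (G.neighborFinset v),
            ((G.neighborFinset u \ insert v (G.neighborFinset v)).filter (G.Adj x)).card) := by
  classical
  set Nu := G.neighborFinset u with hNu
  set Nv := G.neighborFinset v with hNv
  set W := Nu ∩ Nv with hW
  set A := Nu \ insert v Nv with hA
  have hvNu : v ∈ Nu := by rw [hNu, SimpleGraph.mem_neighborFinset]; exact huv
  have hvNv : v ∉ Nv := by rw [hNv, SimpleGraph.mem_neighborFinset]; exact G.irrefl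
  have hsplit : Nu = insert v (W ∪ A) := by
    ext x
    simp only [hW, hA, Finset.mem_insert, Finset.mem_union, Finset.mem_inter, Finset.mem_sdiff]
    constructor
    · intro hx
      by_cases hxv : x = v
      · exact Or.inl hxv
      · by_cases hxN : x ∈ Nv
        · exact Or.inr (Or.inl ⟨hx, hxN⟩)
        · exact Or.inr (Or.inr ⟨hx, fun hc => hc.elim hxv hxN⟩)
    · rintro (rfl | ⟨hx, _⟩ | ⟨hx, _⟩)
      · exact hvNu
      · exact hx
      · exact hx
  have hvWA : v ∉ W ∪ A := by
    rw [Finset.mem_union, hW, hA]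
    rintro (hv | hv)
    · exact hvNv (Finset.mem_inter.1 hv).2
    · exact (Finset.mem_sdiff.1 hv).2 (Finset.mem_insert_self _ _)
  have hdisj : Disjoint W A := by
    rw [Finset.disjoint_left]
    intro x hxW hxA
    rw [hW, Finset.mem_inter] at hxW
    rw [hA, Finset.mem_sdiff] at hxA
    exact hxA.2 (Finset.mem_insert_of_mem hxW.2)
  have hsum : ∀ f : V → ℕ, ∑ x ∈ Nu, f x = f v + (∑ w ∈ W, f w + ∑ x ∈ A, f x) := by
    intro f
    rw [hsplit, Finset.sum_insert hvWA, Finset.sum_union hdisj]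
  have hEu : 2 * K3deg G u = ∑ x ∈ Nu, (Nu.filter fun y => G.Adj x y).card := by
    rw [two_mul_K3deg, pair_card]
  have hfv : ((Nu.filter fun y => G.Adj v y)).card = W.card := by
    congr 1
    ext z
    simp only [Finset.mem_filter, hW, Finset.mem_inter, hNu, hNv,
      SimpleGraph.mem_neighborFinset]
  have hWb : ∀ w ∈ W, ((Nu.filter fun y => G.Adj w y)).card
      ≤ 1 + ((W.filter (G.Adj w)).card + (A.filter (G.Adj w)).card) := by
    intro w _
    have hsub : (Nu.filter fun y => G.Adj w y)
        ⊆ insert v (W.filter (G.Adj w) ∪ A.filter (G.Adj w)) := by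
      intro z hz
      rw [Finset.mem_filter] at hz
      obtain ⟨hzN, hzadj⟩ := hz
      rw [hsplit, Finset.mem_insert, Finset.mem_union] at hzN
      rcases hzN with rfl | hzW | hzA
      · exact Finset.mem_insert_self _ _
      · exact Finset.mem_insert_of_mem (Finset.mem_union_left _ (Finset.mem_filter.2 ⟨hzW, hzadj⟩))
      · exact Finset.mem_insert_of_mem (Finset.mem_union_right _ (Finset.mem_filter.2 ⟨hzA, hzadj⟩))
    have h1 := Finset.card_le_card hsub
    have h2 := Finset.card_insert_le v (W.filter (G.Adj w) ∪ A.filter (G.Adj w))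
    have h3 := Finset.card_union_le (W.filter (G.Adj w)) (A.filter (G.Adj w))
    omega
  have hAb : ∀ x ∈ A, ((Nu.filter fun y => G.Adj x y)).card
      ≤ (W.filter (G.Adj x)).card + (A.filter (G.Adj x)).card := by
    intro x hx
    have hxNv : x ∉ Nv := by
      rw [hA, Finset.mem_sdiff] at hx
      exact fun hc => hx.2 (Finset.mem_insert_of_mem hc)
    have hsub : (Nu.filter fun y => G.Adj x y)
        ⊆ W.filter (G.Adj x) ∪ A.filter (G.Adj x) := by
      intro z hz
      rw [Finset.mem_filter] at hz
      obtain ⟨hzN, hzadj⟩ := hz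
      rw [hsplit, Finset.mem_insert, Finset.mem_union] at hzN
      rcases hzN with rfl | hzW | hzA
      · exact absurd (by rw [hNv, SimpleGraph.mem_neighborFinset]; exact hzadj.symm) hxNv
      · exact Finset.mem_union_left _ (Finset.mem_filter.2 ⟨hzW, hzadj⟩)
      · exact Finset.mem_union_right _ (Finset.mem_filter.2 ⟨hzA, hzadj⟩)
    have h1 := Finset.card_le_card hsub
    have h3 := Finset.card_union_le (W.filter (G.Adj x)) (A.filter (G.Adj x))
    omega
  have hsym : ∑ x ∈ A, (W.filter (G.Adj x)).card = ∑ w ∈ W, (A.filter (G.Adj w)).card :=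
    adj_sum_comm G A W
  have h1 : ∑ w ∈ W, ((Nu.filter fun y => G.Adj w y)).card
      ≤ ∑ w ∈ W, (1 + ((W.filter (G.Adj w)).card + (A.filter (G.Adj w)).card)) :=
    Finset.sum_le_sum hWb
  have h2 : ∑ x ∈ A, ((Nu.filter fun y => G.Adj x y)).card
      ≤ ∑ x ∈ A, ((W.filter (G.Adj x)).card + (A.filter (G.Adj x)).card) :=
    Finset.sum_le_sum hAb
  have h1' : ∑ w ∈ W, (1 + ((W.filter (G.Adj w)).card + (A.filter (G.Adj w)).card))
      = W.card + (∑ w ∈ W, (W.filter (G.Adj w)).card + ∑ w ∈ W, (A.filter (G.Adj w)).card) := by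
    rw [Finset.sum_add_distrib, Finset.sum_add_distrib, Finset.sum_const, smul_eq_mul, mul_one]
  have h2' : ∑ x ∈ A, ((W.filter (G.Adj x)).card + (A.filter (G.Adj x)).card)
      = ∑ x ∈ A, (W.filter (G.Adj x)).card + ∑ x ∈ A, (A.filter (G.Adj x)).card :=
    Finset.sum_add_distrib
  rw [hEu, hsum fun x => ((Nu.filter fun y => G.Adj x y)).card, hfv]
  rw [h1'] at h1
  rw [h2', hsym] at h2
  linarith [h1, h2]

lemma arith (r2 k m : ℕ) (hr2 : r2 = k + 1 + m) :
    4 * k + 2 * (k * (r2 - 2)) + (m * (m - 1) + m * (m - 1))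
      = 2 * (m * (r2 - 2) + k * (k + 1)) := by
  rcases k with _ | k' <;> rcases m with _ | m'
  · subst hr2; simp
  · have h2 : r2 - 2 = m' := by omega
    have h1 : m' + 1 - 1 = m' := by omega
    rw [h2, h1]; ring
  · have h2 : r2 - 2 = k' := by omega
    rw [h2]; ring
  · have h2 : r2 - 2 = k' + m' + 1 := by omega
    have h1 : m' + 1 - 1 = m' := by omega
    rw [h2, h1]; ring

theorem stmt4 {V : Type*} [Fintype V] (G : SimpleGraph V) (r2 r3 k : ℕ)
    (h : HasParams G r2 r3) (u v : V) (huv : G.Adj u v)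
    (hk : (G.neighborSet u ∩ G.neighborSet v).ncard = k) :
    2 * r3 ≤ (r2 - k - 1) * (r2 - 2) + k * (k + 1) := by
  classical
  set Nu := G.neighborFinset u with hNu
  set Nv := G.neighborFinset v with hNv
  set W := Nu ∩ Nv with hW
  set Au := Nu \ insert v Nv with hAu
  set Av := Nv \ insert u Nu with hAv
  have hdeg : ∀ x : V, (G.neighborFinset x).card = r2 := by
    intro x
    have hx := (h x).1
    rw [deg, Set.ncard_eq_toFinset_card'] at hx
    rw [← hx]
    congr 1
  have hNuc : Nu.card = r2 := by rw [hNu]; exact hdeg u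
  have hNvc : Nv.card = r2 := by rw [hNv]; exact hdeg v
  have hWc : W.card = k := by
    rw [← hk, Set.ncard_eq_toFinset_card', hW, hNu, hNv]
    congr 1
    ext y
    simp [Set.mem_toFinset]
  have huNv : u ∈ Nv := by rw [hNv, SimpleGraph.mem_neighborFinset]; exact huv.symm
  have hvNu : v ∈ Nu := by rw [hNu, SimpleGraph.mem_neighborFinset]; exact huv
  have huNu : u ∉ Nu := by rw [hNu, SimpleGraph.mem_neighborFinset]; exact G.irrefl
  have hvNv : v ∉ Nv := by rw [hNv, SimpleGraph.mem_neighborFinset]; exact G.irrefl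
  have hvW : v ∉ W := by rw [hW, Finset.mem_inter]; exact fun hc => hvNv hc.2
  have huW : u ∉ W := by rw [hW, Finset.mem_inter]; exact fun hc => huNu hc.1
  set m := Au.card with hm
  have hr2 : r2 = k + 1 + m := by
    have h5 : Nu ∩ insert v Nv = insert v W := by
      ext x
      simp only [hW, Finset.mem_inter, Finset.mem_insert]
      constructor
      · rintro ⟨hxNu, (rfl | hxNv)⟩
        · exact Or.inl rfl
        · exact Or.inr ⟨hxNu, hxNv⟩
      · rintro (rfl | ⟨h1, h2⟩)
        · exact ⟨hvNu, Or.inl rfl⟩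
        · exact ⟨h1, Or.inr h2⟩
    have h6 := Finset.card_inter_add_card_sdiff Nu (insert v Nv)
    rw [h5, ← hAu, Finset.card_insert_of_notMem hvW, hWc, hNuc, ← hm] at h6
    omega
  have hAvc : Av.card = m := by
    have h5 : Nv ∩ insert u Nu = insert u W := by
      ext x
      simp only [hW, Finset.mem_inter, Finset.mem_insert]
      constructor
      · rintro ⟨hxNv, (rfl | hxNu)⟩
        · exact Or.inl rfl
        · exact Or.inr ⟨hxNu, hxNv⟩
      · rintro (rfl | ⟨h1, h2⟩)
        · exact ⟨huNv, Or.inl rfl⟩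
        · exact ⟨h2, Or.inr h1⟩
    have h6 := Finset.card_inter_add_card_sdiff Nv (insert u Nu)
    rw [h5, ← hAv, Finset.card_insert_of_notMem huW, hWc, hNvc] at h6
    omega
  -- the two one-sided bounds
  have hIu := oneSide G u v huv
  have hIv := oneSide G v u huv.symm
  rw [(h u).2, ← hNu, ← hNv, ← hW, ← hAu] at hIu
  rw [(h v).2, ← hNu, ← hNv, Finset.inter_comm Nv Nu, ← hW, ← hAv] at hIv
  -- disjointness
  have hdWAu : Disjoint W Au := by
    rw [Finset.disjoint_left]
    intro x hxW hxA
    rw [hW, Finset.mem_inter] at hxW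
    rw [hAu, Finset.mem_sdiff] at hxA
    exact hxA.2 (Finset.mem_insert_of_mem hxW.2)
  have hdWAv : Disjoint W Av := by
    rw [Finset.disjoint_left]
    intro x hxW hxA
    rw [hW, Finset.mem_inter] at hxW
    rw [hAv, Finset.mem_sdiff] at hxA
    exact hxA.2 (Finset.mem_insert_of_mem hxW.1)
  have hdAuAv : Disjoint Au Av := by
    rw [Finset.disjoint_left]
    intro x hxA hxA'
    rw [hAu, Finset.mem_sdiff] at hxA
    rw [hAv, Finset.mem_sdiff] at hxA'
    exact hxA'.2 (Finset.mem_insert_of_mem hxA.1)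
  -- bound B1
  have hB1 : ∀ w ∈ W, (W.filter (G.Adj w)).card + (Au.filter (G.Adj w)).card
      + (Av.filter (G.Adj w)).card ≤ r2 - 2 := by
    intro w hw
    have hw' := hw
    rw [hW, Finset.mem_inter] at hw'
    have hwu : u ∈ G.neighborFinset w := by
      rw [SimpleGraph.mem_neighborFinset]
      have := hw'.1; rw [hNu, SimpleGraph.mem_neighborFinset] at this
      exact this.symm
    have hwv : v ∈ (G.neighborFinset w).erase u := by
      rw [Finset.mem_erase, SimpleGraph.mem_neighborFinset]
      have := hw'.2; rw [hNv, SimpleGraph.mem_neighborFinset] at this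
      exact ⟨huv.ne', this.symm⟩
    have hEc : (((G.neighborFinset w).erase u).erase v).card = r2 - 2 := by
      rw [Finset.card_erase_of_mem hwv, Finset.card_erase_of_mem hwu, hdeg w]
      omega
    have hsW : W.filter (G.Adj w) ⊆ ((G.neighborFinset w).erase u).erase v := by
      intro z hz
      rw [Finset.mem_filter] at hz
      obtain ⟨hzW, hzadj⟩ := hz
      rw [hW, Finset.mem_inter] at hzW
      rw [Finset.mem_erase, Finset.mem_erase, SimpleGraph.mem_neighborFinset]
      exact ⟨fun hc => hvNv (hc ▸ hzW.2), fun hc => huNu (hc ▸ hzW.1), hzadj⟩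
    have hsAu : Au.filter (G.Adj w) ⊆ ((G.neighborFinset w).erase u).erase v := by
      intro z hz
      rw [Finset.mem_filter] at hz
      obtain ⟨hzA, hzadj⟩ := hz
      rw [hAu, Finset.mem_sdiff] at hzA
      rw [Finset.mem_erase, Finset.mem_erase, SimpleGraph.mem_neighborFinset]
      refine ⟨fun hc => hzA.2 (hc ▸ Finset.mem_insert_self _ _), fun hc => huNu (hc ▸ hzA.1), hzadj⟩
    have hsAv : Av.filter (G.Adj w) ⊆ ((G.neighborFinset w).erase u).erase v := by
      intro z hz
      rw [Finset.mem_filter] at hz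
      obtain ⟨hzA, hzadj⟩ := hz
      rw [hAv, Finset.mem_sdiff] at hzA
      rw [Finset.mem_erase, Finset.mem_erase, SimpleGraph.mem_neighborFinset]
      refine ⟨fun hc => hvNv (hc ▸ hzA.1), fun hc => hzA.2 (hc ▸ Finset.mem_insert_self _ _), hzadj⟩
    have hd1 : Disjoint (W.filter (G.Adj w)) (Au.filter (G.Adj w)) :=
      Finset.disjoint_filter_filter hdWAu
    have hd2 : Disjoint (W.filter (G.Adj w) ∪ Au.filter (G.Adj w)) (Av.filter (G.Adj w)) := by
      rw [Finset.disjoint_union_left]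
      exact ⟨Finset.disjoint_filter_filter hdWAv, Finset.disjoint_filter_filter hdAuAv⟩
    have hcu : ((W.filter (G.Adj w) ∪ Au.filter (G.Adj w)) ∪ Av.filter (G.Adj w)).card
        = (W.filter (G.Adj w)).card + (Au.filter (G.Adj w)).card + (Av.filter (G.Adj w)).card := by
      rw [Finset.card_union_of_disjoint hd2, Finset.card_union_of_disjoint hd1]
    have hle := Finset.card_le_card
      (Finset.union_subset (Finset.union_subset hsW hsAu) hsAv)
    rw [hcu, hEc] at hle
    exact hle
  have hB1s : (∑ w ∈ W, (W.filter (G.Adj w)).card) + (∑ w ∈ W, (Au.filter (G.Adj w)).card)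
      + (∑ w ∈ W, (Av.filter (G.Adj w)).card) ≤ k * (r2 - 2) := by
    have h7 := Finset.sum_le_sum hB1
    rw [Finset.sum_const, smul_eq_mul, hWc] at h7
    simp only [Finset.sum_add_distrib] at h7
    exact h7
  -- bound B2
  have hB2 : ∀ (A : Finset V), ∀ x ∈ A, (A.filter (G.Adj x)).card ≤ A.card - 1 := by
    intro A x hx
    have hsub : A.filter (G.Adj x) ⊆ A.erase x := by
      intro z hz
      rw [Finset.mem_filter] at hz
      exact Finset.mem_erase.2 ⟨hz.2.ne', hz.1⟩
    have := Finset.card_le_card hsub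
    rwa [Finset.card_erase_of_mem hx] at this
  have hB2u : ∑ x ∈ Au, (Au.filter (G.Adj x)).card ≤ m * (m - 1) := by
    calc ∑ x ∈ Au, (Au.filter (G.Adj x)).card ≤ ∑ _x ∈ Au, (m - 1) :=
          Finset.sum_le_sum fun x hx => by
            have := hB2 Au x hx; rwa [← hm] at this
      _ = m * (m - 1) := by rw [Finset.sum_const, smul_eq_mul, ← hm]
  have hB2v : ∑ x ∈ Av, (Av.filter (G.Adj x)).card ≤ m * (m - 1) := by
    calc ∑ x ∈ Av, (Av.filter (G.Adj x)).card ≤ ∑ _x ∈ Av, (m - 1) :=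
          Finset.sum_le_sum fun x hx => by
            have := hB2 Av x hx; rwa [hAvc] at this
      _ = m * (m - 1) := by rw [Finset.sum_const, smul_eq_mul, hAvc]
  have hfinal : 4 * r3 ≤ 4 * k + 2 * (k * (r2 - 2)) + (m * (m - 1) + m * (m - 1)) := by
    linarith [hIu, hIv, hB1s, hB2u, hB2v, hWc]
  have heq := arith r2 k m hr2
  have h4 : 2 * (2 * r3) ≤ 2 * (m * (r2 - 2) + k * (k + 1)) := by
    rw [← heq]; linarith [hfinal]
  have h5 := Nat.le_of_mul_le_mul_left h4 (by norm_num : 0 < 2)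
  have e1 : r2 - k - 1 = m := by omega
  rw [e1]
  exact h5
end

section
/- For integers r2 > 4 and 0 < c < (r2 − 2)/2, there is no graph in which every vertex has degree r2 and every vertex is contained in exactly (r2−1)(r2−2)/2 + c triangles. -/
/-!
Let `r` be the common degree and, for an edge `vu`, let `D(v, u) = #(N(v) \ N[u])`; regularity
makes `D` symmetric. Counting the non-adjacent ordered pairs of neighbours of `v` gives
`∑_{w ∈ N(v)} D(v, w) = 2 (r - 1 - c) > r`, so some edge `vu` has `D(v, u) ≥ 2`.

Write `Y = N(v) \ N[u]`, `X = N(u) \ N[v]` and `C = N(u) ∩ N(v)`. Every `c ∈ C` satisfies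
`D(v, c) + #(X \ N[c]) ≥ 2`: if `c` sees all of `X` then `X ⊆ N(c) \ N[v]`; if it sees all of `Y`
then `Y ⊆ N(c) \ N[u]`, while `N(u) \ N[c]` is covered by `N(v) \ N[c]` and `X \ N[c]`;
otherwise both terms are positive. Summing over `C` and comparing with the pair count at `v`,
the non-edges between `C` and `X` outnumber those between `C` and `Y` by at least `2c`. The same
argument at `u` gives the reverse inequality, contradicting `c > 0`.
-/

open SimpleGraph Finset

namespace SimpleGraph

section NonAdj

variable {V : Type*} [DecidableEq V] (G : SimpleGraph V) [DecidableRel G.Adj]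

-- `nonAdjIn a s` is `s \ N[a]`, and `privNbrs v u` is `N(v) \ N[u]`.
def nonAdjIn (a : V) (s : Finset V) : Finset V := {b ∈ s.erase a | ¬G.Adj a b}

variable {G}

@[simp]
lemma mem_nonAdjIn {a b : V} {s : Finset V} :
    b ∈ G.nonAdjIn a s ↔ b ∈ s ∧ b ≠ a ∧ ¬G.Adj a b := by
  simp only [nonAdjIn, mem_filter, mem_erase]
  tauto

lemma nonAdjIn_mono {a : V} {s t : Finset V} (h : s ⊆ t) : G.nonAdjIn a s ⊆ G.nonAdjIn a t :=
  filter_subset_filter _ (erase_subset_erase a h)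

lemma sum_card_nonAdjIn_comm (s t : Finset V) :
    ∑ a ∈ s, #(G.nonAdjIn a t) = ∑ b ∈ t, #(G.nonAdjIn b s) := by
  convert sum_card_bipartiteAbove_eq_sum_card_bipartiteBelow (s := s) (t := t)
    (fun a b ↦ b ≠ a ∧ ¬G.Adj a b) using 3 with a _ b _
  · ext; simp
  · ext; simp [ne_comm, G.adj_comm]

end NonAdj

variable {V : Type*} [Fintype V] [DecidableEq V] (G : SimpleGraph V) [DecidableRel G.Adj]

def privNbrs (v u : V) : Finset V := G.nonAdjIn u (G.neighborFinset v)

def nbrNonAdjPairs (v : V) : ℕ := ∑ w ∈ G.neighborFinset v, #(G.privNbrs v w)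

variable {G}

@[simp]
lemma mem_privNbrs {v u w : V} : w ∈ G.privNbrs v u ↔ G.Adj v w ∧ w ≠ u ∧ ¬G.Adj u w := by
  simp [privNbrs]

lemma sum_neighborFinset_eq_of_adj {M : Type*} [AddCommMonoid M] {v u : V} (h : G.Adj v u)
    (f : V → M) :
    ∑ w ∈ G.neighborFinset v, f w
      = f u + ∑ w ∈ G.privNbrs v u, f w + ∑ w ∈ G.neighborFinset v ∩ G.neighborFinset u, f w := by
  rw [← add_sum_erase _ _ ((G.mem_neighborFinset v u).2 h),
    ← sum_filter_not_add_sum_filter _ (G.Adj u), add_assoc]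
  congr 3
  ext w
  simp only [mem_filter, mem_erase, mem_inter, mem_neighborFinset]
  exact ⟨fun ⟨⟨_, hv⟩, hu⟩ ↦ ⟨hv, hu⟩, fun ⟨hv, hu⟩ ↦ ⟨⟨(G.ne_of_adj hu).symm, hv⟩, hu⟩⟩

lemma degree_eq_of_adj {v u : V} (h : G.Adj v u) :
    G.degree v = 1 + #(G.privNbrs v u) + #(G.neighborFinset v ∩ G.neighborFinset u) := by
  simp only [← card_neighborFinset_eq_degree, card_eq_sum_ones]
  exact sum_neighborFinset_eq_of_adj h _

lemma card_privNbrs_comm {r : ℕ} (hreg : G.IsRegularOfDegree r) {u v : V} (h : G.Adj u v) :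
    #(G.privNbrs u v) = #(G.privNbrs v u) := by
  have hu := degree_eq_of_adj h
  have hv := degree_eq_of_adj h.symm
  rw [hreg.degree_eq] at hu hv
  rw [inter_comm] at hv
  omega

lemma card_isNClique_three_mem_mem {v w : V} (h : G.Adj v w) :
    #{t : Finset V | G.IsNClique 3 t ∧ v ∈ t ∧ w ∈ t}
      = #(G.neighborFinset v ∩ G.neighborFinset w) := by
  symm
  refine card_nbij (fun b ↦ {v, w, b}) (fun b hb ↦ ?_) (fun b₁ hb₁ b₂ hb₂ he ↦ ?_) ?_
  · simp only [coe_inter, Set.mem_inter_iff, mem_coe, mem_neighborFinset] at hb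
    simp [is3Clique_triple_iff, h, hb.1, hb.2]
  · simp only [coe_inter, Set.mem_inter_iff, mem_coe, mem_neighborFinset] at hb₁
    have : b₁ ∈ ({v, w, b₂} : Finset V) := by
      simp only at he
      simp [← he]
    simp only [mem_insert, mem_singleton] at this
    rcases this with rfl | rfl | rfl
    · exact absurd hb₁.1 (G.loopless.irrefl _)
    · exact absurd hb₁.2 (G.loopless.irrefl _)
    · rfl
  · rintro t ht
    simp only [coe_filter, mem_univ, true_and] at ht
    obtain ⟨hcl, hv, hw⟩ := ht
    have hw' : w ∈ t.erase v := mem_erase.2 ⟨G.ne_of_adj h |>.symm, hw⟩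
    obtain ⟨b, hb⟩ : ∃ b, (t.erase v).erase w = {b} := card_eq_one.1 <| by
      rw [card_erase_of_mem hw', card_erase_of_mem hv, hcl.card_eq]
    have hbt : b ∈ (t.erase v).erase w := hb ▸ mem_singleton_self b
    simp only [mem_erase] at hbt
    refine ⟨b, ?_, ?_⟩
    · simp only [coe_inter, Set.mem_inter_iff, mem_coe, mem_neighborFinset]
      exact ⟨hcl.1 hv hbt.2.2 (Ne.symm hbt.2.1), hcl.1 hw hbt.2.2 (Ne.symm hbt.1)⟩
    · rw [← insert_erase hv, ← insert_erase hw', hb]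

lemma sum_card_inter_neighborFinset_eq_two_mul_K3deg (v : V) :
    ∑ w ∈ G.neighborFinset v, #(G.neighborFinset v ∩ G.neighborFinset w) = 2 * K3deg G v := by
  set T : Finset (Finset V) := {t | G.IsNClique 3 t ∧ v ∈ t}
  have hK : K3deg G v = #T := by
    rw [K3deg, ← Set.ncard_coe_finset, coe_filter]
    simp
  calc ∑ w ∈ G.neighborFinset v, #(G.neighborFinset v ∩ G.neighborFinset w)
      = ∑ w ∈ G.neighborFinset v, #(T.bipartiteAbove (· ∈ ·) w) := by
        refine sum_congr rfl fun w hw ↦ ?_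
        rw [← card_isNClique_three_mem_mem ((G.mem_neighborFinset v w).1 hw), bipartiteAbove,
          filter_filter]
        simp only [and_assoc]
    _ = ∑ t ∈ T, #((G.neighborFinset v).bipartiteBelow (· ∈ ·) t) :=
        sum_card_bipartiteAbove_eq_sum_card_bipartiteBelow _
    _ = ∑ t ∈ T, 2 := by
        refine sum_congr rfl fun t ht ↦ ?_
        obtain ⟨hcl, hv⟩ := (mem_filter.1 ht).2
        have : (G.neighborFinset v).bipartiteBelow (· ∈ ·) t = t.erase v := by
          ext w
          simp only [mem_bipartiteBelow, mem_neighborFinset, mem_erase]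
          exact ⟨fun ⟨hvw, hw⟩ ↦ ⟨G.ne_of_adj hvw |>.symm, hw⟩,
            fun ⟨hwv, hw⟩ ↦ ⟨hcl.1 hv hw hwv.symm, hw⟩⟩
        rw [this, card_erase_of_mem hv, hcl.card_eq]
    _ = 2 * K3deg G v := by rw [sum_const, smul_eq_mul, hK, mul_comm]

lemma nbrNonAdjPairs_add_degree_add_two_mul_K3deg (v : V) :
    G.nbrNonAdjPairs v + G.degree v + 2 * K3deg G v = G.degree v * G.degree v := by
  have hsplit : ∀ w ∈ G.neighborFinset v,
      #(G.privNbrs v w) + 1 + #(G.neighborFinset v ∩ G.neighborFinset w) = G.degree v :=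
    fun w hw ↦ by rw [degree_eq_of_adj ((G.mem_neighborFinset v w).1 hw)]; ring
  have hsum := sum_congr rfl hsplit
  simp only [sum_add_distrib, sum_const, smul_eq_mul, mul_one, card_neighborFinset_eq_degree]
    at hsum
  rw [← sum_card_inter_neighborFinset_eq_two_mul_K3deg, nbrNonAdjPairs]
  omega

lemma card_nonAdjIn_lt_card_privNbrs {v u y : V} (h : G.Adj v u) (hy : y ∈ G.privNbrs v u) :
    #(G.nonAdjIn y (G.neighborFinset v ∩ G.neighborFinset u)) < #(G.privNbrs v y) := by
  rw [mem_privNbrs] at hy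
  refine card_lt_card <| (ssubset_iff_of_subset (nonAdjIn_mono inter_subset_left)).2 ⟨u, ?_, ?_⟩
  · exact mem_privNbrs.2 ⟨h, hy.2.1.symm, fun hyu ↦ hy.2.2 hyu.symm⟩
  · simp

lemma card_privNbrs_le_card_privNbrs_add {u v c : V} (hvc : G.Adj v c) :
    #(G.privNbrs u c) ≤ #(G.privNbrs v c) + #(G.nonAdjIn c (G.privNbrs u v)) := by
  refine (card_le_card fun z hz ↦ ?_).trans (card_union_le _ _)
  simp only [mem_union, mem_privNbrs, mem_nonAdjIn] at hz ⊢
  obtain ⟨huz, hzc, hcz⟩ := hz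
  by_cases hvz : G.Adj v z
  · exact Or.inl ⟨hvz, hzc, hcz⟩
  · exact Or.inr ⟨⟨huz, fun hzv ↦ hcz (hzv ▸ hvc.symm), hvz⟩, hzc, hcz⟩

lemma privNbrs_subset_privNbrs_of_nonAdjIn_eq_empty {u v c : V} (hvc : G.Adj v c)
    (h : G.nonAdjIn c (G.privNbrs u v) = ∅) : G.privNbrs u v ⊆ G.privNbrs c v := by
  intro x hx
  have hcx : G.Adj c x := by
    by_contra hcx
    have hxc : x ≠ c := fun hxc ↦ (mem_privNbrs.1 hx).2.2 (hxc ▸ hvc)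
    simpa [h] using mem_nonAdjIn.2 ⟨hx, hxc, hcx⟩
  rw [mem_privNbrs] at hx ⊢
  exact ⟨hcx, hx.2⟩

lemma two_le_card_privNbrs_add_card_nonAdjIn {r : ℕ} (hreg : G.IsRegularOfDegree r)
    {v u c : V} (huv : G.Adj u v) (hD : 2 ≤ #(G.privNbrs v u))
    (hc : c ∈ G.neighborFinset v ∩ G.neighborFinset u) :
    2 ≤ #(G.privNbrs v c) + #(G.nonAdjIn c (G.privNbrs u v)) := by
  simp only [mem_inter, mem_neighborFinset] at hc
  obtain ⟨hvc, huc⟩ := hc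
  by_cases hX : G.nonAdjIn c (G.privNbrs u v) = ∅
  · have := card_le_card (privNbrs_subset_privNbrs_of_nonAdjIn_eq_empty hvc hX)
    rw [card_privNbrs_comm hreg huv, card_privNbrs_comm hreg hvc.symm] at this
    omega
  by_cases hY : G.nonAdjIn c (G.privNbrs v u) = ∅
  · have hYc := card_le_card (privNbrs_subset_privNbrs_of_nonAdjIn_eq_empty huc hY)
    rw [card_privNbrs_comm hreg huc.symm] at hYc
    have := card_privNbrs_le_card_privNbrs_add (u := u) hvc
    omega
  have hYv : #(G.nonAdjIn c (G.privNbrs v u)) ≤ #(G.privNbrs v c) :=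
    card_le_card (nonAdjIn_mono (filter_subset _ _ |>.trans (erase_subset _ _)))
  rw [← ne_eq, ← nonempty_iff_ne_empty, ← card_pos] at hX hY
  omega

lemma two_mul_degree_add_sum_le {r : ℕ} (hreg : G.IsRegularOfDegree r) {v u : V}
    (h : G.Adj v u) (hD : 2 ≤ #(G.privNbrs v u)) :
    2 * G.degree v
        + ∑ c ∈ G.neighborFinset v ∩ G.neighborFinset u, #(G.nonAdjIn c (G.privNbrs v u))
      ≤ G.nbrNonAdjPairs v + 2
        + ∑ c ∈ G.neighborFinset v ∩ G.neighborFinset u, #(G.nonAdjIn c (G.privNbrs u v)) := by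
  rw [degree_eq_of_adj h, nbrNonAdjPairs, sum_neighborFinset_eq_of_adj h]
  set Y := G.privNbrs v u
  set C := G.neighborFinset v ∩ G.neighborFinset u
  have hY : ∑ y ∈ Y, (#(G.nonAdjIn y C) + 1) ≤ ∑ y ∈ Y, #(G.privNbrs v y) :=
    sum_le_sum fun y hy ↦ card_nonAdjIn_lt_card_privNbrs h hy
  have hC : ∑ c ∈ C, 2 ≤ ∑ c ∈ C, (#(G.privNbrs v c) + #(G.nonAdjIn c (G.privNbrs u v))) :=
    sum_le_sum fun c hc ↦ two_le_card_privNbrs_add_card_nonAdjIn hreg h.symm hD hc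
  rw [sum_add_distrib, sum_card_nonAdjIn_comm, sum_const, smul_eq_mul, mul_one] at hY
  rw [sum_add_distrib, sum_const, smul_eq_mul] at hC
  omega

lemma exists_two_le_card_privNbrs {v : V} (h : G.degree v < G.nbrNonAdjPairs v) :
    ∃ u ∈ G.neighborFinset v, 2 ≤ #(G.privNbrs v u) := by
  refine exists_lt_of_sum_lt (f := fun _ ↦ 1) ?_
  rwa [sum_const, smul_eq_mul, mul_one, card_neighborFinset_eq_degree]

lemma nbrNonAdjPairs_add_two_mul_add_two {v : V} {r c : ℕ} (hdeg : G.degree v = r) (hr : 0 < r)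
    (hK3 : K3deg G v = (r - 1).choose 2 + c) : G.nbrNonAdjPairs v + 2 * c + 2 = 2 * r := by
  have hv := nbrNonAdjPairs_add_degree_add_two_mul_K3deg (G := G) v
  rw [hdeg, hK3, mul_add, Nat.choose_two_right,
    Nat.mul_div_cancel' (Nat.even_mul_pred_self _).two_dvd] at hv
  obtain ⟨s, rfl⟩ : ∃ s, r = s + 1 := ⟨r - 1, by omega⟩
  rw [Nat.add_sub_cancel, Nat.mul_sub_one] at hv
  have hsq : (s + 1) * (s + 1) = s * s + 2 * s + 1 := by ring
  have := Nat.le_mul_self s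
  omega

omit [Fintype V] [DecidableEq V] [DecidableRel G.Adj] in
lemma deg_eq_degree (v : V) [Fintype (G.neighborSet v)] : deg G v = G.degree v := by
  rw [deg, ← card_neighborFinset_eq_degree, neighborFinset_def, Set.ncard_eq_toFinset_card']

end SimpleGraph

theorem stmt5_general (r2 c : ℕ) (hc0 : 0 < c) (hc : 2 * c < r2 - 2) :
    ¬ ∃ (V : Type) (_ : Fintype V) (_ : Nonempty V) (G : SimpleGraph V),
      HasParams G r2 (Nat.choose (r2 - 1) 2 + c) := by
  rintro ⟨V, _, ⟨v₀⟩, G, hG⟩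
  classical
  have hreg : G.IsRegularOfDegree r2 := fun v ↦ (deg_eq_degree v).symm.trans (hG v).1
  have hpairs : ∀ v, G.nbrNonAdjPairs v + 2 * c + 2 = 2 * r2 := fun v ↦
    nbrNonAdjPairs_add_two_mul_add_two (hreg v) (by omega) (hG v).2
  obtain ⟨u, hu, hD⟩ := exists_two_le_card_privNbrs (G := G) (v := v₀) <| by
    have := hpairs v₀
    rw [hreg.degree_eq]
    omega
  have huv := (G.mem_neighborFinset v₀ u).1 hu
  have h₁ := two_mul_degree_add_sum_le hreg huv hD
  have h₂ := two_mul_degree_add_sum_le hreg huv.symm (card_privNbrs_comm hreg huv.symm ▸ hD)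
  rw [hreg.degree_eq] at h₁
  rw [hreg.degree_eq, inter_comm] at h₂
  have := hpairs v₀
  have := hpairs u
  omega

theorem stmt5 (r2 c : ℕ) (hr2 : 4 < r2) (hc0 : 0 < c) (hc : 2 * c < r2 - 2) :
    ¬ ∃ (V : Type) (_ : Fintype V) (_ : Nonempty V) (G : SimpleGraph V),
      HasParams G r2 (Nat.choose (r2 - 1) 2 + c) :=
  stmt5_general r2 c hc0 hc
end

section
/- For graphs G1 and G2 and a vertex (u, v) of the Cartesian product G1 □ G2, the K3-degree of (u, v) in G1 □ G2 equals the K3-degree of u in G1 plus the K3-degree of v in G2. -/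
open SimpleGraph Finset

lemma boxProd_triangle {V1 V2 : Type*} {G1 : SimpleGraph V1} {G2 : SimpleGraph V2}
    {x y z : V1 × V2} (hxy : (G1.boxProd G2).Adj x y) (hyz : (G1.boxProd G2).Adj y z)
    (hxz : (G1.boxProd G2).Adj x z) :
    (x.2 = y.2 ∧ y.2 = z.2) ∨ (x.1 = y.1 ∧ y.1 = z.1) := by
  rw [SimpleGraph.boxProd_adj] at hxy hyz hxz
  rcases hxy with ⟨h1, e1⟩ | ⟨h1, e1⟩ <;> rcases hyz with ⟨h2, e2⟩ | ⟨h2, e2⟩ <;>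
    rcases hxz with ⟨h3, e3⟩ | ⟨h3, e3⟩ <;> simp_all

theorem stmt7 {V1 V2 : Type*} [Fintype V1] [Fintype V2]
    (G1 : SimpleGraph V1) (G2 : SimpleGraph V2) (u : V1) (v : V2) :
    K3deg (G1.boxProd G2) (u, v) = K3deg G1 u + K3deg G2 v := by
  classical
  unfold K3deg
  set f1 : Finset V1 → Finset (V1 × V2) := fun t => t.image (fun a => (a, v)) with hf1
  set f2 : Finset V2 → Finset (V1 × V2) := fun t => t.image (fun b => (u, b)) with hf2
  have hinj1 : Function.Injective f1 :=
    Finset.image_injective (fun a b h => by simpa using h)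
  have hinj2 : Function.Injective f2 :=
    Finset.image_injective (fun a b h => by simpa using h)
  have hset : {t : Finset (V1 × V2) | (G1.boxProd G2).IsNClique 3 t ∧ (u, v) ∈ t}
      = f1 '' {t | G1.IsNClique 3 t ∧ u ∈ t} ∪ f2 '' {t | G2.IsNClique 3 t ∧ v ∈ t} := by
    ext t
    simp only [Set.mem_setOf_eq, Set.mem_union, Set.mem_image]
    constructor
    · rintro ⟨hcl, huv⟩
      obtain ⟨x, y, z, hxy, hxz, hyz, ht⟩ := Finset.card_eq_three.mp hcl.2
      have hx : x ∈ t := by rw [ht]; simp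
      have hy : y ∈ t := by rw [ht]; simp
      have hz : z ∈ t := by rw [ht]; simp
      have axy := hcl.1 hx hy hxy
      have ayz := hcl.1 hy hz hyz
      have axz := hcl.1 hx hz hxz
      rcases boxProd_triangle axy ayz axz with ⟨e1, e2⟩ | ⟨e1, e2⟩
      · -- all second coords equal; common value is v
        have hv : x.2 = v := by
          rw [ht] at huv; simp at huv
          rcases huv with h | h | h
          · exact (congrArg Prod.snd h).symm
          · exact e1.trans (congrArg Prod.snd h).symm
          · exact e1.trans (e2.trans (congrArg Prod.snd h).symm)
        left
        refine ⟨{x.1, y.1, z.1}, ⟨⟨?_, ?_⟩, ?_⟩, ?_⟩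
        · intro a ha b hb hab
          simp only [Finset.coe_insert, Set.mem_insert_iff, Finset.coe_singleton,
            Set.mem_singleton_iff] at ha hb
          have key : ∀ p q : V1 × V2, p ∈ t → q ∈ t → p.1 ≠ q.1 → G1.Adj p.1 q.1 := by
            intro p q hp hq hne
            have hpq : p ≠ q := fun h => hne (h ▸ rfl)
            have := hcl.1 hp hq hpq
            rw [SimpleGraph.boxProd_adj] at this
            rcases this with ⟨h, _⟩ | ⟨_, h⟩
            · exact h
            · exact absurd h hne
          rcases ha with rfl | rfl | rfl <;> rcases hb with rfl | rfl | rfl <;>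
            first
            | exact absurd rfl hab
            | exact key _ _ hx hy hab
            | exact key _ _ hy hx hab
            | exact key _ _ hx hz hab
            | exact key _ _ hz hx hab
            | exact key _ _ hy hz hab
            | exact key _ _ hz hy hab
        · -- card = 3
          have h12 : x.1 ≠ y.1 := by
            intro h; exact hxy (Prod.ext_iff.mpr ⟨h, e1⟩)
          have h13 : x.1 ≠ z.1 := by
            intro h; exact hxz (Prod.ext_iff.mpr ⟨h, e1.trans e2⟩)
          have h23 : y.1 ≠ z.1 := by
            intro h; exact hyz (Prod.ext_iff.mpr ⟨h, e2⟩)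
          rw [Finset.card_insert_of_notMem (by simp [h12, h13]),
            Finset.card_insert_of_notMem (by simp [h23]), Finset.card_singleton]
        · -- u ∈ {x.1, y.1, z.1}
          rw [ht] at huv; simp at huv ⊢
          rcases huv with h | h | h
          · exact Or.inl (congrArg Prod.fst h)
          · exact Or.inr (Or.inl (congrArg Prod.fst h))
          · exact Or.inr (Or.inr (congrArg Prod.fst h))
        · -- f1 {x.1,y.1,z.1} = t
          have hy2 : y.2 = v := e1 ▸ hv
          have hz2 : z.2 = v := e2 ▸ hy2
          have hx' : (x.1, v) = x := by rw [← hv]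
          have hy' : (y.1, v) = y := by rw [← hy2]
          have hz' : (z.1, v) = z := by rw [← hz2]
          rw [hf1, ht]
          simp only [Finset.image_insert, Finset.image_singleton]
          rw [hx', hy', hz']
      · -- all first coords equal; common value is u
        have hu : x.1 = u := by
          rw [ht] at huv; simp at huv
          rcases huv with h | h | h
          · exact (congrArg Prod.fst h).symm
          · exact e1.trans (congrArg Prod.fst h).symm
          · exact e1.trans (e2.trans (congrArg Prod.fst h).symm)
        right
        refine ⟨{x.2, y.2, z.2}, ⟨⟨?_, ?_⟩, ?_⟩, ?_⟩
        · intro a ha b hb hab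
          simp only [Finset.coe_insert, Set.mem_insert_iff, Finset.coe_singleton,
            Set.mem_singleton_iff] at ha hb
          have key : ∀ p q : V1 × V2, p ∈ t → q ∈ t → p.2 ≠ q.2 → G2.Adj p.2 q.2 := by
            intro p q hp hq hne
            have hpq : p ≠ q := fun h => hne (h ▸ rfl)
            have := hcl.1 hp hq hpq
            rw [SimpleGraph.boxProd_adj] at this
            rcases this with ⟨_, h⟩ | ⟨h, _⟩
            · exact absurd h hne
            · exact h
          rcases ha with rfl | rfl | rfl <;> rcases hb with rfl | rfl | rfl <;>
            first
            | exact absurd rfl hab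
            | exact key _ _ hx hy hab
            | exact key _ _ hy hx hab
            | exact key _ _ hx hz hab
            | exact key _ _ hz hx hab
            | exact key _ _ hy hz hab
            | exact key _ _ hz hy hab
        · have h12 : x.2 ≠ y.2 := by
            intro h; exact hxy (Prod.ext_iff.mpr ⟨e1, h⟩)
          have h13 : x.2 ≠ z.2 := by
            intro h; exact hxz (Prod.ext_iff.mpr ⟨e1.trans e2, h⟩)
          have h23 : y.2 ≠ z.2 := by
            intro h; exact hyz (Prod.ext_iff.mpr ⟨e2, h⟩)
          rw [Finset.card_insert_of_notMem (by simp [h12, h13]),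
            Finset.card_insert_of_notMem (by simp [h23]), Finset.card_singleton]
        · rw [ht] at huv; simp at huv ⊢
          rcases huv with h | h | h
          · exact Or.inl (congrArg Prod.snd h)
          · exact Or.inr (Or.inl (congrArg Prod.snd h))
          · exact Or.inr (Or.inr (congrArg Prod.snd h))
        · have hy1 : y.1 = u := e1 ▸ hu
          have hz1 : z.1 = u := e2 ▸ hy1
          have hx' : (u, x.2) = x := by rw [← hu]
          have hy' : (u, y.2) = y := by rw [← hy1]
          have hz' : (u, z.2) = z := by rw [← hz1]
          rw [hf2, ht]
          simp only [Finset.image_insert, Finset.image_singleton]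
          rw [hx', hy', hz']
    · rintro (⟨s, ⟨hcl, hus⟩, rfl⟩ | ⟨s, ⟨hcl, hvs⟩, rfl⟩)
      · refine ⟨⟨?_, ?_⟩, ?_⟩
        · intro p hp q hq hpq
          simp only [hf1, Finset.coe_image, Set.mem_image, Finset.mem_coe] at hp hq
          obtain ⟨a, ha, rfl⟩ := hp
          obtain ⟨b, hb, rfl⟩ := hq
          have hab : a ≠ b := fun h => hpq (by rw [h])
          exact SimpleGraph.boxProd_adj.mpr (Or.inl ⟨hcl.1 ha hb hab, rfl⟩)
        · rw [hf1]
          rw [Finset.card_image_of_injective _ (fun a b h => by simpa using h)]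
          exact hcl.2
        · exact Finset.mem_image_of_mem _ hus
      · refine ⟨⟨?_, ?_⟩, ?_⟩
        · intro p hp q hq hpq
          simp only [hf2, Finset.coe_image, Set.mem_image, Finset.mem_coe] at hp hq
          obtain ⟨a, ha, rfl⟩ := hp
          obtain ⟨b, hb, rfl⟩ := hq
          have hab : a ≠ b := fun h => hpq (by rw [h])
          exact SimpleGraph.boxProd_adj.mpr (Or.inr ⟨hcl.1 ha hb hab, rfl⟩)
        · rw [hf2]
          rw [Finset.card_image_of_injective _ (fun a b h => by simpa using h)]
          exact hcl.2
        · exact Finset.mem_image_of_mem _ hvs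
  have hdisj : Disjoint (f1 '' {t | G1.IsNClique 3 t ∧ u ∈ t})
      (f2 '' {t | G2.IsNClique 3 t ∧ v ∈ t}) := by
    rw [Set.disjoint_left]
    rintro t ⟨s1, ⟨hcl1, _⟩, rfl⟩ ⟨s2, ⟨hcl2, _⟩, h⟩
    -- f1 s1 = f2 s2, card 3, but elements have second coord v / first coord u
    have hcard : (f1 s1).card = 3 := by
      rw [hf1, Finset.card_image_of_injective _ (fun a b h => by simpa using h)]
      exact hcl1.2
    have hsub : f1 s1 ⊆ {(u, v)} := by
      intro p hp
      have hp2 : p ∈ f2 s2 := h ▸ hp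
      simp only [hf1, hf2, Finset.mem_image] at hp hp2
      obtain ⟨a, _, rfl⟩ := hp
      obtain ⟨b, _, he⟩ := hp2
      simp only [Finset.mem_singleton, Prod.mk.injEq] at he ⊢
      exact ⟨he.1.symm, trivial⟩
    have := Finset.card_le_card hsub
    simp [hcard] at this
  rw [hset, Set.ncard_union_eq hdisj (Set.toFinite _) (Set.toFinite _),
    Set.ncard_image_of_injective _ hinj1, Set.ncard_image_of_injective _ hinj2]
end

section
/- Let m ≥ 2. Every connected graph in which every vertex has degree 2m and every vertex lies in exactly 2m(m−1) triangles is isomorphic to the Turán graph Turan(2m+2, m+1), i.e. the complete (m+1)-partite graph with all parts of size 2. -/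
open SimpleGraph Finset

set_option linter.unusedSectionVars false
namespace Stmt17

variable {V : Type*} [Fintype V] [DecidableEq V] {G : SimpleGraph V} [DecidableRel G.Adj]

lemma deg_eq (v : V) : deg G v = (G.neighborFinset v).card := by
  rw [deg, neighborFinset_def, Set.ncard_eq_toFinset_card']

lemma key_bound {y w : V} (hw : w ∈ G.neighborFinset y) (C : Finset V)
    (hC : C ⊆ G.neighborFinset y) (hCw : ∀ c ∈ C, ¬ G.Adj w c) (hwC : w ∉ C) :
    (G.neighborFinset y ∩ G.neighborFinset w).card + C.card + 1 ≤ (G.neighborFinset y).card := by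
  have h1 : (G.neighborFinset y ∩ G.neighborFinset w) ∪ insert w C ⊆ G.neighborFinset y := by
    intro x hx
    rcases Finset.mem_union.1 hx with hx | hx
    · exact (Finset.mem_inter.1 hx).1
    · rcases Finset.mem_insert.1 hx with rfl | hx
      · exact hw
      · exact hC hx
  have hdisj : Disjoint (G.neighborFinset y ∩ G.neighborFinset w) (insert w C) := by
    rw [Finset.disjoint_left]
    intro x hx hx'
    have hxw : x ∈ G.neighborFinset w := (Finset.mem_inter.1 hx).2
    rcases Finset.mem_insert.1 hx' with rfl | hx'
    · exact (G.irrefl ((mem_neighborFinset _ _ _).1 hxw))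
    · exact hCw x hx' ((mem_neighborFinset G w x).1 hxw)
  calc (G.neighborFinset y ∩ G.neighborFinset w).card + C.card + 1
      = (G.neighborFinset y ∩ G.neighborFinset w).card + (insert w C).card := by
        rw [Finset.card_insert_of_notMem hwC]; ring
    _ = ((G.neighborFinset y ∩ G.neighborFinset w) ∪ insert w C).card :=
        (Finset.card_union_of_disjoint hdisj).symm
    _ ≤ _ := Finset.card_le_card h1


lemma k3_finset (v : V) :
    K3deg G v = (Finset.univ.filter (fun t : Finset V => G.IsNClique 3 t ∧ v ∈ t)).card := by
  rw [K3deg]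
  rw [show {t : Finset V | G.IsNClique 3 t ∧ v ∈ t}
      = ↑(Finset.univ.filter (fun t : Finset V => G.IsNClique 3 t ∧ v ∈ t)) by
    ext t; simp]
  exact Set.ncard_coe_finset _

lemma doubling (v : V) :
    ∑ w ∈ G.neighborFinset v, (G.neighborFinset v ∩ G.neighborFinset w).card
      = 2 * K3deg G v := by
  classical
  set N := G.neighborFinset v with hN
  set P : Finset (V × V) := (N ×ˢ N).filter (fun p => G.Adj p.1 p.2) with hP
  have memP : ∀ p : V × V, p ∈ P ↔ (p.1 ∈ N ∧ p.2 ∈ N ∧ G.Adj p.1 p.2) := by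
    intro p; simp [hP, Finset.mem_filter, Finset.mem_product, and_assoc]
  -- step 1 : P.card as the sum
  have step1 : P.card = ∑ w ∈ N, (N ∩ G.neighborFinset w).card := by
    rw [Finset.card_eq_sum_card_fiberwise (f := Prod.fst) (t := N)
      (fun p hp => ((memP p).1 hp).1)]
    refine Finset.sum_congr rfl (fun w hw => ?_)
    refine Finset.card_bij (fun p _ => p.2) ?_ ?_ ?_
    · intro p hp
      simp only [Finset.mem_filter] at hp
      obtain ⟨hp, hp1⟩ := hp
      obtain ⟨h1, h2, h3⟩ := (memP p).1 hp
      rw [Finset.mem_inter]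
      exact ⟨h2, (mem_neighborFinset G w p.2).2 (hp1 ▸ h3)⟩
    · intro p hp q hq hpq
      simp only [Finset.mem_filter] at hp hq
      exact Prod.ext (hp.2.trans hq.2.symm) hpq
    · intro b hb
      rw [Finset.mem_inter] at hb
      refine ⟨(w, b), ?_, rfl⟩
      rw [Finset.mem_filter]
      exact ⟨(memP (w, b)).2 ⟨hw, hb.1, (mem_neighborFinset G w b).1 hb.2⟩, rfl⟩
  -- step 2 : P.card = 2 * number of triangles through v
  have step2 : P.card = 2 * K3deg G v := by
    rw [k3_finset]
    set Sf := Finset.univ.filter (fun t : Finset V => G.IsNClique 3 t ∧ v ∈ t) with hSf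
    have hmapsto : ∀ p ∈ P, ({v, p.1, p.2} : Finset V) ∈ Sf := by
      intro p hp
      obtain ⟨h1, h2, h3⟩ := (memP p).1 hp
      rw [hSf, Finset.mem_filter]
      refine ⟨Finset.mem_univ _, ?_, by simp⟩
      rw [is3Clique_triple_iff]
      exact ⟨(mem_neighborFinset _ _ _).1 h1, (mem_neighborFinset _ _ _).1 h2, h3⟩
    rw [Finset.card_eq_sum_card_fiberwise hmapsto]
    have hfib : ∀ t ∈ Sf, (P.filter (fun p => ({v, p.1, p.2} : Finset V) = t)).card = 2 := by
      intro t ht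
      rw [hSf, Finset.mem_filter] at ht
      obtain ⟨-, htc, hvt⟩ := ht
      have hcard2 : (t.erase v).card = 2 := by
        rw [Finset.card_erase_of_mem hvt, htc.card_eq]
      obtain ⟨a, b, hab, habt⟩ := Finset.card_eq_two.1 hcard2
      have hat : a ∈ t.erase v := habt ▸ (by simp)
      have hbt : b ∈ t.erase v := habt ▸ (by simp)
      have hav : a ≠ v := (Finset.mem_erase.1 hat).1
      have hbv : b ≠ v := (Finset.mem_erase.1 hbt).1
      have hteq : t = {v, a, b} := by
        rw [← Finset.insert_erase hvt, habt]
      have hclique := hteq ▸ htc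
      rw [is3Clique_triple_iff] at hclique
      obtain ⟨hva, hvb, hadj⟩ := hclique
      have hfeq : P.filter (fun p => ({v, p.1, p.2} : Finset V) = t)
          = {(a, b), (b, a)} := by
        ext p
        simp only [Finset.mem_filter, Finset.mem_insert, Finset.mem_singleton]
        constructor
        · rintro ⟨hp, hpt⟩
          obtain ⟨h1, h2, h3⟩ := (memP p).1 hp
          have h1v : p.1 ≠ v := by
            intro h; rw [h] at h1; exact G.irrefl ((mem_neighborFinset G v v).1 h1)
          have h2v : p.2 ≠ v := by
            intro h; rw [h] at h2; exact G.irrefl ((mem_neighborFinset G v v).1 h2)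
          have h12 : p.1 ≠ p.2 := G.ne_of_adj h3
          have hp1 : p.1 ∈ ({v, a, b} : Finset V) := by
            rw [← hteq, ← hpt]; simp
          have hp2 : p.2 ∈ ({v, a, b} : Finset V) := by
            rw [← hteq, ← hpt]; simp
          simp only [Finset.mem_insert, Finset.mem_singleton] at hp1 hp2
          rcases hp1 with h | h | h
          · exact absurd h h1v
          · left
            rcases hp2 with h' | h' | h'
            · exact absurd h' h2v
            · exact absurd (h.trans h'.symm) h12
            · exact Prod.ext h h'
          · right
            rcases hp2 with h' | h' | h'
            · exact absurd h' h2v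
            · exact Prod.ext h h'
            · exact absurd (h.trans h'.symm) h12
        · have haN : a ∈ N := (mem_neighborFinset G v a).2 hva
          have hbN : b ∈ N := (mem_neighborFinset G v b).2 hvb
          rintro (rfl | rfl)
          · exact ⟨(memP (a, b)).2 ⟨haN, hbN, hadj⟩, by rw [hteq]⟩
          · refine ⟨(memP (b, a)).2 ⟨hbN, haN, hadj.symm⟩, ?_⟩
            rw [hteq]
            apply Finset.Subset.antisymm <;> intro x hx <;>
              simp only [Finset.mem_insert, Finset.mem_singleton] at hx ⊢ <;> tauto
      rw [hfeq, Finset.card_insert_of_notMem, Finset.card_singleton]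
      simp only [Finset.mem_singleton, Prod.mk.injEq, not_and]
      intro h _; exact hab h
    rw [Finset.sum_congr rfl hfib, Finset.sum_const, smul_eq_mul, Nat.mul_comm]
  rw [← step1, step2]


variable {m : ℕ}

lemma arith1 (hm : 2 ≤ m) : 2 * (2 * m * (m - 1)) + 4 * m = 2 * m * (2 * m) := by
  obtain ⟨m', rfl⟩ : ∃ m', m = m' + 2 := ⟨m - 2, by omega⟩
  simp [Nat.add_sub_cancel]
  ring

lemma t_le_self (hdeg : ∀ x : V, (G.neighborFinset x).card = 2 * m) (r x : V) :
    (G.neighborFinset r ∩ G.neighborFinset x).card ≤ 2 * m :=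
  (hdeg r) ▸ Finset.card_le_card Finset.inter_subset_left

lemma t_lt (hdeg : ∀ x : V, (G.neighborFinset x).card = 2 * m) {r x : V}
    (hx : x ∈ G.neighborFinset r) :
    (G.neighborFinset r ∩ G.neighborFinset x).card + 1 ≤ 2 * m := by
  have := key_bound hx ∅ (Finset.empty_subset _) (by simp) (Finset.notMem_empty x)
  rw [hdeg r] at this
  simpa using this

lemma phi_eq (hdeg : ∀ x : V, (G.neighborFinset x).card = 2 * m) {v w : V}
    (hw : w ∈ G.neighborFinset v) :
    (G.neighborFinset v ∩ G.neighborFinset w).card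
      + ((G.neighborFinset v \ G.neighborFinset w).erase w).card + 1 = 2 * m := by
  have h1 := Finset.card_inter_add_card_sdiff (G.neighborFinset v) (G.neighborFinset w)
  rw [hdeg v] at h1
  have hwmem : w ∈ G.neighborFinset v \ G.neighborFinset w :=
    Finset.mem_sdiff.2 ⟨hw, G.notMem_neighborFinset_self w⟩
  have h2 := Finset.card_erase_add_one hwmem
  omega

lemma sum_s (hm : 2 ≤ m) (hdeg : ∀ x : V, (G.neighborFinset x).card = 2 * m)
    (hsum : ∀ x : V, ∑ w ∈ G.neighborFinset x,
      (G.neighborFinset x ∩ G.neighborFinset w).card = 2 * (2 * m * (m - 1)))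
    (r : V) :
    ∑ x ∈ G.neighborFinset r, (2 * m - (G.neighborFinset r ∩ G.neighborFinset x).card)
      = 4 * m := by
  have h1 : ∑ x ∈ G.neighborFinset r,
      ((G.neighborFinset r ∩ G.neighborFinset x).card
        + (2 * m - (G.neighborFinset r ∩ G.neighborFinset x).card)) = 2 * m * (2 * m) := by
    rw [Finset.sum_congr rfl (fun x _ => Nat.add_sub_cancel' (t_le_self hdeg r x))]
    rw [Finset.sum_const, hdeg r, smul_eq_mul]
  rw [Finset.sum_add_distrib, hsum r, ← arith1 hm] at h1
  exact Nat.add_left_cancel h1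

lemma outside_card (hdeg : ∀ x : V, (G.neighborFinset x).card = 2 * m) {v r : V}
    (hr : r ∈ G.neighborFinset v) :
    (G.neighborFinset r \ insert v (G.neighborFinset v)).card
      = ((G.neighborFinset v \ G.neighborFinset r).erase r).card := by
  have hvr : v ∈ G.neighborFinset r :=
    (mem_neighborFinset G r v).2 ((mem_neighborFinset G v r).1 hr).symm
  have h1 : G.neighborFinset r ∩ insert v (G.neighborFinset v)
      = insert v (G.neighborFinset r ∩ G.neighborFinset v) := by
    ext x
    simp only [Finset.mem_inter, Finset.mem_insert]
    constructor
    · rintro ⟨hx1, rfl | hx2⟩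
      · exact Or.inl rfl
      · exact Or.inr ⟨hx1, hx2⟩
    · rintro (rfl | ⟨hx1, hx2⟩)
      · exact ⟨hvr, Or.inl rfl⟩
      · exact ⟨hx1, Or.inr hx2⟩
  have h2 : v ∉ G.neighborFinset r ∩ G.neighborFinset v := by
    intro h
    exact G.notMem_neighborFinset_self v (Finset.mem_inter.1 h).2
  have h3 := Finset.card_inter_add_card_sdiff (G.neighborFinset r) (insert v (G.neighborFinset v))
  rw [h1, Finset.card_insert_of_notMem h2, hdeg r] at h3
  have h4 := phi_eq hdeg hr
  rw [Finset.inter_comm] at h4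
  omega

lemma lemA (hm : 2 ≤ m) (hdeg : ∀ x : V, (G.neighborFinset x).card = 2 * m)
    (hsum : ∀ x : V, ∑ w ∈ G.neighborFinset x,
      (G.neighborFinset x ∩ G.neighborFinset w).card = 2 * (2 * m * (m - 1)))
    {v : V} {K : Finset V}
    (hKM : ∀ u ∈ K, u ∈ insert v (G.neighborFinset v))
    (hadjK : ∀ u ∈ K, ∀ x ∈ insert v (G.neighborFinset v), x ≠ u → G.Adj u x)
    (hnadjK : ∀ u ∈ K, ∀ x, x ∉ insert v (G.neighborFinset v) → ¬ G.Adj u x)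
    {r : V} (hr : r ∈ G.neighborFinset v) (hrK : r ∉ K) :
    K.card * ((G.neighborFinset v \ G.neighborFinset r).erase r).card ≤ m := by
  set M : Finset V := insert v (G.neighborFinset v) with hM
  set B : Finset V := G.neighborFinset r \ M with hB
  set φr : ℕ := ((G.neighborFinset v \ G.neighborFinset r).erase r).card with hφr
  have hrM : r ∈ M := Finset.mem_insert_of_mem hr
  have hKr : K ⊆ G.neighborFinset r := by
    intro u hu
    have hru : r ≠ u := fun h => hrK (h ▸ hu)
    exact (mem_neighborFinset G r u).2 (hadjK u hu r hrM hru).symm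
  have hBsub : B ⊆ G.neighborFinset r := Finset.sdiff_subset
  have hdisj : Disjoint K B := by
    rw [Finset.disjoint_left]
    intro u hu huB
    exact (Finset.mem_sdiff.1 huB).2 (hKM u hu)
  have hBcard : B.card = φr := outside_card hdeg hr
  -- bounds
  have hbK : ∀ u ∈ K, (G.neighborFinset r ∩ G.neighborFinset u).card + φr + 1 ≤ 2 * m := by
    intro u hu
    have := key_bound (hKr hu) B hBsub
      (fun c hc => hnadjK u hu c (Finset.mem_sdiff.1 hc).2)
      (fun hc => (Finset.mem_sdiff.1 hc).2 (hKM u hu))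
    rw [hdeg r, hBcard] at this
    exact this
  have hbB : ∀ b ∈ B, (G.neighborFinset r ∩ G.neighborFinset b).card + K.card + 1 ≤ 2 * m := by
    intro b hb
    have hbnadj : ∀ u ∈ K, ¬ G.Adj b u := by
      intro u hu hadj
      exact hnadjK u hu b (Finset.mem_sdiff.1 hb).2 hadj.symm
    have hbK' : b ∉ K := fun h => (Finset.mem_sdiff.1 hb).2 (hKM b h)
    have := key_bound (hBsub hb) K hKr hbnadj hbK'
    rw [hdeg r] at this
    exact this
  -- summation
  have hsub : K ∪ B ⊆ G.neighborFinset r := Finset.union_subset hKr hBsub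
  have hsplit := Finset.sum_sdiff (f := fun x => 2 * m - (G.neighborFinset r ∩ G.neighborFinset x).card) hsub
  beta_reduce at hsplit
  rw [sum_s hm hdeg hsum r] at hsplit
  have hRest : 2 * m - (K.card + φr)
      ≤ ∑ x ∈ G.neighborFinset r \ (K ∪ B), (2 * m - (G.neighborFinset r ∩ G.neighborFinset x).card) := by
    have h1 : (G.neighborFinset r \ (K ∪ B)).card = 2 * m - (K.card + φr) := by
      rw [Finset.card_sdiff_of_subset hsub, hdeg r, Finset.card_union_of_disjoint hdisj, hBcard]
    have := Finset.card_nsmul_le_sum (G.neighborFinset r \ (K ∪ B))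
      (fun x => 2 * m - (G.neighborFinset r ∩ G.neighborFinset x).card) 1
      (fun x hx => by
        show 1 ≤ 2 * m - (G.neighborFinset r ∩ G.neighborFinset x).card
        have := t_lt hdeg (Finset.mem_sdiff.1 hx).1
        omega)
    rw [h1] at this
    simpa [smul_eq_mul] using this
  have hKB : ∑ x ∈ K ∪ B, (2 * m - (G.neighborFinset r ∩ G.neighborFinset x).card)
      = ∑ x ∈ K, (2 * m - (G.neighborFinset r ∩ G.neighborFinset x).card)
        + ∑ x ∈ B, (2 * m - (G.neighborFinset r ∩ G.neighborFinset x).card) :=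
    Finset.sum_union hdisj
  have hKlow : K.card * (φr + 1)
      ≤ ∑ x ∈ K, (2 * m - (G.neighborFinset r ∩ G.neighborFinset x).card) := by
    have := Finset.card_nsmul_le_sum K
      (fun x => 2 * m - (G.neighborFinset r ∩ G.neighborFinset x).card) (φr + 1)
      (fun x hx => by
        show φr + 1 ≤ 2 * m - (G.neighborFinset r ∩ G.neighborFinset x).card
        have := hbK x hx
        omega)
    simpa [smul_eq_mul] using this
  have hBlow : φr * (K.card + 1)
      ≤ ∑ x ∈ B, (2 * m - (G.neighborFinset r ∩ G.neighborFinset x).card) := by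
    have := Finset.card_nsmul_le_sum B
      (fun x => 2 * m - (G.neighborFinset r ∩ G.neighborFinset x).card) (K.card + 1)
      (fun x hx => by
        show K.card + 1 ≤ 2 * m - (G.neighborFinset r ∩ G.neighborFinset x).card
        have := hbB x hx
        omega)
    rw [hBcard] at this
    simpa [smul_eq_mul] using this
  have hcKB : (K ∪ B).card = K.card + φr := by
    rw [Finset.card_union_of_disjoint hdisj, hBcard]
  have hcle : K.card + φr ≤ 2 * m := by
    rw [← hcKB, ← hdeg r]
    exact Finset.card_le_card hsub
  have e2 : K.card * (φr + 1) = K.card * φr + K.card := by ring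
  have e3 : φr * (K.card + 1) = K.card * φr + φr := by ring
  omega


lemma no_twins (hm : 2 ≤ m) (hdeg : ∀ x : V, (G.neighborFinset x).card = 2 * m)
    (hsum : ∀ x : V, ∑ w ∈ G.neighborFinset x,
      (G.neighborFinset x ∩ G.neighborFinset w).card = 2 * (2 * m * (m - 1)))
    {u0 v : V} (hne : u0 ≠ v)
    (htw : insert u0 (G.neighborFinset u0) = insert v (G.neighborFinset v)) : False := by
  classical
  set M : Finset V := insert v (G.neighborFinset v) with hM
  set K : Finset V := Finset.univ.filter (fun u : V => insert u (G.neighborFinset u) = M)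
    with hKdef
  have hKspec : ∀ u ∈ K, insert u (G.neighborFinset u) = M :=
    fun u hu => (Finset.mem_filter.1 hu).2
  have hKmem : ∀ u : V, insert u (G.neighborFinset u) = M → u ∈ K :=
    fun u h => Finset.mem_filter.2 ⟨Finset.mem_univ u, h⟩
  have hvK : v ∈ K := hKmem v rfl
  have hu0K : u0 ∈ K := hKmem u0 htw
  have hk2 : 2 ≤ K.card := by
    rw [← Finset.card_pair hne]
    apply Finset.card_le_card
    intro x hx
    rcases Finset.mem_insert.1 hx with rfl | hx
    · exact hu0K
    · rw [Finset.mem_singleton.1 hx]; exact hvK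
  have hKM : ∀ u ∈ K, u ∈ M := fun u hu => (hKspec u hu) ▸ Finset.mem_insert_self u _
  have hadjK : ∀ u ∈ K, ∀ x ∈ M, x ≠ u → G.Adj u x := by
    intro u hu x hx hxu
    have hx' : x ∈ insert u (G.neighborFinset u) := (hKspec u hu).symm ▸ hx
    rcases Finset.mem_insert.1 hx' with rfl | hx'
    · exact absurd rfl hxu
    · exact (mem_neighborFinset G u x).1 hx'
  have hnadjK : ∀ u ∈ K, ∀ x, x ∉ M → ¬ G.Adj u x := by
    intro u hu x hx hadj
    exact hx ((hKspec u hu) ▸ Finset.mem_insert_of_mem ((mem_neighborFinset G u x).2 hadj))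
  have hvNv : v ∉ G.neighborFinset v := G.notMem_neighborFinset_self v
  have hNvM : G.neighborFinset v ⊆ M := Finset.subset_insert _ _
  -- φ values at v
  set φ : V → ℕ := fun w => ((G.neighborFinset v \ G.neighborFinset w).erase w).card with hφ
  have hP1 : ∀ w ∈ G.neighborFinset v,
      (G.neighborFinset v ∩ G.neighborFinset w).card + φ w + 1 = 2 * m :=
    fun w hw => phi_eq hdeg hw
  have hP2 : ∑ w ∈ G.neighborFinset v, φ w = 2 * m := by
    have h1 : ∑ w ∈ G.neighborFinset v,
        ((G.neighborFinset v ∩ G.neighborFinset w).card + (φ w + 1)) = 2 * m * (2 * m) := by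
      rw [Finset.sum_congr rfl (fun w hw => by rw [← add_assoc, hP1 w hw])]
      rw [Finset.sum_const, hdeg v, smul_eq_mul]
    rw [Finset.sum_add_distrib, Finset.sum_add_distrib, Finset.sum_const, hdeg v,
      smul_eq_mul, mul_one, hsum v, ← arith1 hm] at h1
    omega
  -- φ w = 0 implies twin
  have hP3 : ∀ w ∈ G.neighborFinset v, φ w = 0 → w ∈ K := by
    intro w hw h0
    apply hKmem
    have hsub : M ⊆ insert w (G.neighborFinset w) := by
      intro x hx
      by_cases hxw : x = w
      · exact hxw ▸ Finset.mem_insert_self _ _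
      · apply Finset.mem_insert_of_mem
        rw [mem_neighborFinset]
        rcases Finset.mem_insert.1 hx with h | hx'
        · rw [h]; exact ((mem_neighborFinset G v w).1 hw).symm
        · by_contra hadj
          have hmem : x ∈ (G.neighborFinset v \ G.neighborFinset w).erase w :=
            Finset.mem_erase.2 ⟨hxw, Finset.mem_sdiff.2
              ⟨hx', fun hc => hadj ((mem_neighborFinset G w x).1 hc)⟩⟩
          have : (G.neighborFinset v \ G.neighborFinset w).erase w = ∅ :=
            Finset.card_eq_zero.1 h0
          rw [this] at hmem
          exact absurd hmem (Finset.notMem_empty x)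
    have hc1 : M.card = 2 * m + 1 := by
      rw [hM, Finset.card_insert_of_notMem hvNv, hdeg v]
    have hc2 : (insert w (G.neighborFinset w)).card = 2 * m + 1 := by
      rw [Finset.card_insert_of_notMem (G.notMem_neighborFinset_self w), hdeg w]
    exact (Finset.eq_of_subset_of_card_le hsub (by omega)).symm
  have hKphi : ∀ u ∈ K, φ u = 0 := by
    intro u hu
    rw [hφ]
    simp only [Finset.card_eq_zero]
    rw [Finset.eq_empty_iff_forall_notMem]
    intro x hx
    obtain ⟨hxu, hxmem⟩ := Finset.mem_erase.1 hx
    obtain ⟨hxNv, hxNu⟩ := Finset.mem_sdiff.1 hxmem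
    exact hxNu ((mem_neighborFinset G u x).2 (hadjK u hu x (hNvM hxNv) hxu))
  -- lemA specialised
  have hlemA : ∀ r ∈ G.neighborFinset v, r ∉ K → K.card * φ r ≤ m :=
    fun r hr hrK => lemA hm hdeg hsum hKM hadjK hnadjK hr hrK
  -- K.card ≤ m
  have hkm : K.card ≤ m := by
    have hex : ∃ w ∈ G.neighborFinset v, φ w ≠ 0 := by
      by_contra hcon
      push_neg at hcon
      have : ∑ w ∈ G.neighborFinset v, φ w = 0 := Finset.sum_eq_zero hcon
      omega
    obtain ⟨w, hw, hw0⟩ := hex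
    have hwK : w ∉ K := fun h => hw0 (hKphi w h)
    have h1 := hlemA w hw hwK
    have h2 : K.card * 1 ≤ K.card * φ w := Nat.mul_le_mul_left _ (by omega)
    omega
  -- exists r1 with φ r1 = 1
  have hr1ex : ∃ r1 ∈ G.neighborFinset v, φ r1 = 1 := by
    by_contra hcon
    push_neg at hcon
    set Nz : Finset V := (G.neighborFinset v).filter (fun w => φ w = 0) with hNz
    have hNzK : Nz ⊆ K.erase v := by
      intro w hw
      obtain ⟨hw1, hw2⟩ := Finset.mem_filter.1 hw
      exact Finset.mem_erase.2 ⟨fun h => hvNv (h ▸ hw1), hP3 w hw1 hw2⟩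
    have hNzc : Nz.card ≤ K.card - 1 := by
      have := Finset.card_le_card hNzK
      rw [Finset.card_erase_of_mem hvK] at this
      exact this
    have hbig : ∀ w ∈ G.neighborFinset v \ Nz, 2 ≤ φ w := by
      intro w hw
      obtain ⟨hw1, hw2⟩ := Finset.mem_sdiff.1 hw
      have h0 : φ w ≠ 0 := fun h => hw2 (Finset.mem_filter.2 ⟨hw1, h⟩)
      have h1 : φ w ≠ 1 := hcon w hw1
      omega
    have h1 : (G.neighborFinset v \ Nz).card * 2 ≤ ∑ w ∈ G.neighborFinset v \ Nz, φ w := by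
      simpa [smul_eq_mul] using Finset.card_nsmul_le_sum (G.neighborFinset v \ Nz) φ 2 hbig
    have h2 : ∑ w ∈ G.neighborFinset v \ Nz, φ w ≤ ∑ w ∈ G.neighborFinset v, φ w :=
      Finset.sum_le_sum_of_subset Finset.sdiff_subset
    have h3 : (G.neighborFinset v \ Nz).card = 2 * m - Nz.card := by
      rw [Finset.card_sdiff_of_subset (Finset.filter_subset _ _), hdeg v]
    rw [h3] at h1
    omega
  obtain ⟨r1, hr1Nv, hφr1⟩ := hr1ex
  have hr1K : r1 ∉ K := fun h => by rw [hKphi r1 h] at hφr1; exact absurd hφr1 (by omega)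
  -- the unique non-neighbour r' of r1 inside N v
  obtain ⟨r', hr'⟩ := Finset.card_eq_one.1 hφr1
  have hr'mem : r' ∈ (G.neighborFinset v \ G.neighborFinset r1).erase r1 := by
    rw [hr']; exact Finset.mem_singleton_self r'
  have hr'r1 : r' ≠ r1 := (Finset.mem_erase.1 hr'mem).1
  have hr'Nv : r' ∈ G.neighborFinset v :=
    (Finset.mem_sdiff.1 (Finset.mem_of_mem_erase hr'mem)).1
  have hr'nadj : r' ∉ G.neighborFinset r1 :=
    (Finset.mem_sdiff.1 (Finset.mem_of_mem_erase hr'mem)).2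
  have hr'K : r' ∉ K := by
    intro h
    exact hr'nadj ((mem_neighborFinset G r1 r').2
      (hadjK r' h r1 (hNvM hr1Nv) (fun hc => hr'r1 hc.symm)).symm)
  -- b : the unique outside neighbour of r1
  have hBc : (G.neighborFinset r1 \ M).card = 1 := by
    rw [hM, outside_card hdeg hr1Nv]; exact hφr1
  obtain ⟨b, hb⟩ := Finset.card_eq_one.1 hBc
  have hbmem : b ∈ G.neighborFinset r1 \ M := by rw [hb]; exact Finset.mem_singleton_self b
  have hbNr1 : b ∈ G.neighborFinset r1 := (Finset.mem_sdiff.1 hbmem).1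
  have hbM : b ∉ M := (Finset.mem_sdiff.1 hbmem).2
  -- the set A
  set A : Finset V := (((G.neighborFinset v) \ K).erase r1).erase r' with hA
  have hAmem : ∀ a, a ∈ A ↔ (a ∈ G.neighborFinset v ∧ a ∉ K ∧ a ≠ r1 ∧ a ≠ r') := by
    intro a
    rw [hA]
    simp only [Finset.mem_erase, Finset.mem_sdiff]
    tauto
  have hKNr1 : K ⊆ G.neighborFinset r1 := by
    intro u hu
    have hru : r1 ≠ u := fun h => hr1K (h ▸ hu)
    exact (mem_neighborFinset G r1 u).2 (hadjK u hu r1 (hNvM hr1Nv) hru).symm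
  have hANr1 : A ⊆ G.neighborFinset r1 := by
    intro a ha
    obtain ⟨haNv, haK, har1, har'⟩ := (hAmem a).1 ha
    by_contra hnot
    have : a ∈ (G.neighborFinset v \ G.neighborFinset r1).erase r1 :=
      Finset.mem_erase.2 ⟨har1, Finset.mem_sdiff.2 ⟨haNv, hnot⟩⟩
    rw [hr'] at this
    exact har' (Finset.mem_singleton.1 this)
  -- partition of N r1
  have hpart : G.neighborFinset r1 = (K ∪ A) ∪ {b} := by
    apply Finset.Subset.antisymm
    · intro x hx
      by_cases hxM : x ∈ M
      · by_cases hxK : x ∈ K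
        · exact Finset.mem_union_left _ (Finset.mem_union_left _ hxK)
        · apply Finset.mem_union_left _ ∘ Finset.mem_union_right _
          have hxNv : x ∈ G.neighborFinset v := by
            rcases Finset.mem_insert.1 hxM with rfl | h
            · exact absurd hvK hxK
            · exact h
          refine (hAmem x).2 ⟨hxNv, hxK, ?_, ?_⟩
          · intro h; rw [h] at hx; exact G.notMem_neighborFinset_self r1 hx
          · intro h; rw [h] at hx; exact hr'nadj hx
      · have : x ∈ G.neighborFinset r1 \ M := Finset.mem_sdiff.2 ⟨hx, hxM⟩
        rw [hb] at this
        exact Finset.mem_union_right _ this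
    · refine Finset.union_subset (Finset.union_subset hKNr1 hANr1) ?_
      intro x hx
      rw [Finset.mem_singleton.1 hx]
      exact hbNr1
  have hAM : A ⊆ M := fun a ha => hNvM ((hAmem a).1 ha).1
  have hdisj1 : Disjoint K A := by
    rw [Finset.disjoint_left]
    intro x hx hx'
    exact ((hAmem x).1 hx').2.1 hx
  have hdisj2 : Disjoint (K ∪ A) ({b} : Finset V) := by
    rw [Finset.disjoint_right]
    intro x hx hx'
    rw [Finset.mem_singleton.1 hx] at hx'
    rcases Finset.mem_union.1 hx' with h | h
    · exact hbM (hKM b h)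
    · exact hbM (hAM h)
  have hAcard : K.card + A.card + 1 = 2 * m := by
    have := hdeg r1
    rw [hpart, Finset.card_union_of_disjoint hdisj2,
      Finset.card_union_of_disjoint hdisj1, Finset.card_singleton] at this
    omega
  -- ψ values inside A
  set ψ : V → ℕ := fun a => ((A.filter (fun x => ¬ G.Adj a x)).erase a).card with hψ
  have hbA : ∀ a ∈ A, (G.neighborFinset r1 ∩ G.neighborFinset a).card + ψ a + 1 ≤ 2 * m := by
    intro a ha
    have hCsub : (A.filter (fun x => ¬ G.Adj a x)).erase a ⊆ G.neighborFinset r1 :=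
      fun c hc => hANr1 (Finset.filter_subset _ _ (Finset.mem_of_mem_erase hc))
    have := key_bound (hANr1 ha) _ hCsub
      (fun c hc => (Finset.mem_filter.1 (Finset.mem_of_mem_erase hc)).2)
      (Finset.notMem_erase a _)
    rw [hdeg r1] at this
    exact this
  have hbK1 : ∀ u ∈ K, (G.neighborFinset r1 ∩ G.neighborFinset u).card + 2 ≤ 2 * m := by
    intro u hu
    have := key_bound (hKNr1 hu) {b} (Finset.singleton_subset_iff.2 hbNr1)
      (fun c hc => by rw [Finset.mem_singleton.1 hc]; exact hnadjK u hu b hbM)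
      (fun hc => hbM (by rw [← Finset.mem_singleton.1 hc]; exact hKM u hu))
    rw [hdeg r1, Finset.card_singleton] at this
    omega
  -- split of the φ-sum over N v
  have hKev : K.erase v ⊆ G.neighborFinset v := by
    intro u hu
    obtain ⟨huv, huK⟩ := Finset.mem_erase.1 hu
    rcases Finset.mem_insert.1 (hKM u huK) with h | h
    · exact absurd h huv
    · exact h
  have hNvpart : G.neighborFinset v = ((K.erase v) ∪ A) ∪ {r1, r'} := by
    apply Finset.Subset.antisymm
    · intro x hx
      by_cases hxK : x ∈ K
      · exact Finset.mem_union_left _ (Finset.mem_union_left _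
          (Finset.mem_erase.2 ⟨fun h => hvNv (h ▸ hx), hxK⟩))
      · by_cases h1 : x = r1
        · exact Finset.mem_union_right _ (by rw [h1]; exact Finset.mem_insert_self _ _)
        · by_cases h2 : x = r'
          · exact Finset.mem_union_right _
              (by rw [h2]; exact Finset.mem_insert_of_mem (Finset.mem_singleton_self _))
          · exact Finset.mem_union_left _ (Finset.mem_union_right _
              ((hAmem x).2 ⟨hx, hxK, h1, h2⟩))
    · refine Finset.union_subset (Finset.union_subset hKev (fun a ha => ((hAmem a).1 ha).1)) ?_
      intro x hx
      rcases Finset.mem_insert.1 hx with rfl | hx'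
      · exact hr1Nv
      · rw [Finset.mem_singleton.1 hx']; exact hr'Nv
  have hd3 : Disjoint (K.erase v) A := by
    rw [Finset.disjoint_left]
    intro x hx hx'
    exact ((hAmem x).1 hx').2.1 (Finset.mem_of_mem_erase hx)
  have hd4 : Disjoint ((K.erase v) ∪ A) ({r1, r'} : Finset V) := by
    rw [Finset.disjoint_right]
    intro x hx hx'
    have hxK : x ∉ K ∧ x ≠ r1 ∧ x ≠ r' → False := by
      intro ⟨h1, h2, h3⟩
      rcases Finset.mem_insert.1 hx with rfl | hxx
      · exact h2 rfl
      · exact h3 (Finset.mem_singleton.1 hxx)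
    rcases Finset.mem_union.1 hx' with h | h
    · have hxK' := Finset.mem_of_mem_erase h
      rcases Finset.mem_insert.1 hx with rfl | hxx
      · exact hr1K hxK'
      · rw [Finset.mem_singleton.1 hxx] at hxK'
        exact hr'K hxK'
    · obtain ⟨-, -, h1, h2⟩ := (hAmem x).1 h
      rcases Finset.mem_insert.1 hx with rfl | hxx
      · exact h1 rfl
      · exact h2 (Finset.mem_singleton.1 hxx)
  have hsumNv : ∑ w ∈ G.neighborFinset v, φ w
      = (∑ w ∈ K.erase v, φ w + ∑ w ∈ A, φ w) + (φ r1 + φ r') := by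
    rw [hNvpart, Finset.sum_union hd4, Finset.sum_union hd3, Finset.sum_pair hr'r1.symm]
  have hKz : ∑ w ∈ K.erase v, φ w = 0 :=
    Finset.sum_eq_zero (fun u hu => hKphi u (Finset.mem_of_mem_erase hu))
  have hstar : ∑ w ∈ A, φ w + 1 + φ r' = 2 * m := by
    rw [hP2, hKz, hφr1] at hsumNv
    omega
  -- comparing φ and ψ on A
  set A2 : Finset V := A.filter (fun a => ¬ G.Adj a r') with hA2
  have hDsub : ∀ a ∈ A, ((G.neighborFinset v \ G.neighborFinset a).erase a)
      ⊆ insert r' ((A.filter (fun x => ¬ G.Adj a x)).erase a) := by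
    intro a ha x hx
    obtain ⟨hxa, hxmem⟩ := Finset.mem_erase.1 hx
    obtain ⟨hxNv, hxNa⟩ := Finset.mem_sdiff.1 hxmem
    by_cases hxr' : x = r'
    · rw [hxr']; exact Finset.mem_insert_self _ _
    · apply Finset.mem_insert_of_mem
      have hxK : x ∉ K := fun hK => hxNa ((mem_neighborFinset G a x).2
        ((hadjK x hK a (hAM ha) (fun h => hxa h.symm)).symm))
      have hxr1 : x ≠ r1 := by
        intro h
        rw [h] at hxNa
        exact hxNa ((mem_neighborFinset G a r1).2
          ((mem_neighborFinset G r1 a).1 (hANr1 ha)).symm)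
      exact Finset.mem_erase.2 ⟨hxa, Finset.mem_filter.2
        ⟨(hAmem x).2 ⟨hxNv, hxK, hxr1, hxr'⟩,
          fun hc => hxNa ((mem_neighborFinset G a x).2 hc)⟩⟩
  have hφψ1 : ∀ a ∈ A, φ a ≤ ψ a + 1 := by
    intro a ha
    have h1 := Finset.card_le_card (hDsub a ha)
    have h2 := Finset.card_insert_le r' ((A.filter (fun x => ¬ G.Adj a x)).erase a)
    have h3 : φ a = ((G.neighborFinset v \ G.neighborFinset a).erase a).card := rfl
    have h4 : ψ a = ((A.filter (fun x => ¬ G.Adj a x)).erase a).card := rfl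
    omega
  have hφψ0 : ∀ a ∈ A, G.Adj a r' → φ a ≤ ψ a := by
    intro a ha hadj
    have hsub2 : ((G.neighborFinset v \ G.neighborFinset a).erase a)
        ⊆ (A.filter (fun x => ¬ G.Adj a x)).erase a := by
      intro x hx
      have hx' := hDsub a ha hx
      rcases Finset.mem_insert.1 hx' with h | h
      · exfalso
        rw [h] at hx
        exact (Finset.mem_sdiff.1 (Finset.mem_of_mem_erase hx)).2
          ((mem_neighborFinset G a r').2 hadj)
      · exact h
    exact Finset.card_le_card hsub2
  have hA2le : A2.card ≤ φ r' := by
    apply Finset.card_le_card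
    intro a ha
    obtain ⟨haA, hanadj⟩ := Finset.mem_filter.1 ha
    obtain ⟨haNv, -, -, har'⟩ := (hAmem a).1 haA
    refine Finset.mem_erase.2 ⟨har', Finset.mem_sdiff.2 ⟨haNv, ?_⟩⟩
    intro hc
    exact hanadj (((mem_neighborFinset G r' a).1 hc).symm)
  have hsumφψ : ∑ a ∈ A, φ a ≤ ∑ a ∈ A, ψ a + A2.card := by
    calc ∑ a ∈ A, φ a ≤ ∑ a ∈ A, (ψ a + if a ∈ A2 then 1 else 0) := by
          apply Finset.sum_le_sum
          intro a ha
          by_cases hc : a ∈ A2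
          · rw [if_pos hc]; exact hφψ1 a ha
          · rw [if_neg hc]
            have hadj : G.Adj a r' := by
              by_contra hn
              exact hc (Finset.mem_filter.2 ⟨ha, hn⟩)
            simpa using hφψ0 a ha hadj
      _ = ∑ a ∈ A, ψ a + ∑ a ∈ A, (if a ∈ A2 then 1 else 0) := Finset.sum_add_distrib
      _ = ∑ a ∈ A, ψ a + A2.card := by
          rw [Finset.sum_ite_mem, Finset.inter_eq_right.2 (Finset.filter_subset _ _),
            Finset.sum_const, smul_eq_mul, mul_one]
  -- the main sum at r1
  have hsplit1 : (∑ x ∈ K, (2 * m - (G.neighborFinset r1 ∩ G.neighborFinset x).card)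
      + ∑ x ∈ A, (2 * m - (G.neighborFinset r1 ∩ G.neighborFinset x).card))
      + (2 * m - (G.neighborFinset r1 ∩ G.neighborFinset b).card) = 4 * m := by
    have h0 := sum_s hm hdeg hsum r1
    set f : V → ℕ := fun x => 2 * m - (G.neighborFinset r1 ∩ G.neighborFinset x).card with hf
    rw [hpart, Finset.sum_union hdisj2, Finset.sum_union hdisj1, Finset.sum_singleton] at h0
    exact h0
  have hKlow1 : K.card * 2
      ≤ ∑ x ∈ K, (2 * m - (G.neighborFinset r1 ∩ G.neighborFinset x).card) := by
    have := Finset.card_nsmul_le_sum K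
      (fun x => 2 * m - (G.neighborFinset r1 ∩ G.neighborFinset x).card) 2
      (fun x hx => by
        show 2 ≤ 2 * m - (G.neighborFinset r1 ∩ G.neighborFinset x).card
        have := hbK1 x hx
        omega)
    simpa [smul_eq_mul] using this
  have hAlow1 : ∑ a ∈ A, ψ a + A.card
      ≤ ∑ x ∈ A, (2 * m - (G.neighborFinset r1 ∩ G.neighborFinset x).card) := by
    have h1 : ∑ a ∈ A, (ψ a + 1)
        ≤ ∑ x ∈ A, (2 * m - (G.neighborFinset r1 ∩ G.neighborFinset x).card) := by
      apply Finset.sum_le_sum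
      intro a ha
      have := hbA a ha
      omega
    rw [Finset.sum_add_distrib, Finset.sum_const, smul_eq_mul, mul_one] at h1
    exact h1
  have hTle := t_le_self hdeg r1 b
  -- the set W inside N b
  set W : Finset V := insert r1 (G.neighborFinset b ∩ A) with hW
  have hbr1 : r1 ∈ G.neighborFinset b :=
    (mem_neighborFinset G b r1).2 ((mem_neighborFinset G r1 b).1 hbNr1).symm
  have hWsub : W ⊆ G.neighborFinset b :=
    Finset.insert_subset_iff.2 ⟨hbr1, Finset.inter_subset_left⟩
  have hr1A : r1 ∉ A := fun h => ((hAmem r1).1 h).2.2.1 rfl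
  have hWco : W.card = (G.neighborFinset b ∩ A).card + 1 := by
    rw [hW, Finset.card_insert_of_notMem (fun h => hr1A (Finset.mem_inter.1 h).2)]
  have htbW : (G.neighborFinset r1 ∩ G.neighborFinset b).card
      ≤ (G.neighborFinset b ∩ A).card := by
    apply Finset.card_le_card
    intro x hx
    obtain ⟨hx1, hx2⟩ := Finset.mem_inter.1 hx
    rw [hpart] at hx1
    rcases Finset.mem_union.1 hx1 with h | h
    · rcases Finset.mem_union.1 h with h' | h'
      · exact absurd ((mem_neighborFinset G b x).1 hx2).symm (hnadjK x h' b hbM)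
      · exact Finset.mem_inter.2 ⟨hx2, h'⟩
    · rw [Finset.mem_singleton.1 h] at hx2
      exact absurd hx2 (G.notMem_neighborFinset_self b)
  have hbW : ∀ y ∈ W, (G.neighborFinset b ∩ G.neighborFinset y).card + K.card + 1 ≤ 2 * m := by
    intro y hy
    have hyNb : y ∈ G.neighborFinset b := hWsub hy
    have hbNy : b ∈ G.neighborFinset y :=
      (mem_neighborFinset G y b).2 ((mem_neighborFinset G b y).1 hyNb).symm
    have hKy : K ⊆ G.neighborFinset y := by
      rcases Finset.mem_insert.1 hy with h | h
      · rw [h]; exact hKNr1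
      · have hyA : y ∈ A := (Finset.mem_inter.1 h).2
        intro u hu
        have hyu : y ≠ u := fun hc => ((hAmem y).1 hyA).2.1 (hc ▸ hu)
        exact (mem_neighborFinset G y u).2 (hadjK u hu y (hAM hyA) hyu).symm
    have hnadj : ∀ u ∈ K, ¬ G.Adj b u := fun u hu hadj => hnadjK u hu b hbM hadj.symm
    have hbKn : b ∉ K := fun h => hbM (hKM b h)
    have := key_bound hbNy K hKy hnadj hbKn
    rw [hdeg y, Finset.inter_comm] at this
    exact this
  -- the sum at b
  have hsplitb := Finset.sum_sdiff
    (f := fun y => 2 * m - (G.neighborFinset b ∩ G.neighborFinset y).card) hWsub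
  beta_reduce at hsplitb
  rw [sum_s hm hdeg hsum b] at hsplitb
  have hWlow : W.card * (K.card + 1)
      ≤ ∑ y ∈ W, (2 * m - (G.neighborFinset b ∩ G.neighborFinset y).card) := by
    have := Finset.card_nsmul_le_sum W
      (fun y => 2 * m - (G.neighborFinset b ∩ G.neighborFinset y).card) (K.card + 1)
      (fun y hy => by
        show K.card + 1 ≤ 2 * m - (G.neighborFinset b ∩ G.neighborFinset y).card
        have := hbW y hy
        omega)
    simpa [smul_eq_mul] using this
  have hrestb : 2 * m - W.card
      ≤ ∑ y ∈ G.neighborFinset b \ W, (2 * m - (G.neighborFinset b ∩ G.neighborFinset y).card) := by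
    have h1 : (G.neighborFinset b \ W).card = 2 * m - W.card := by
      rw [Finset.card_sdiff_of_subset hWsub, hdeg b]
    have := Finset.card_nsmul_le_sum (G.neighborFinset b \ W)
      (fun y => 2 * m - (G.neighborFinset b ∩ G.neighborFinset y).card) 1
      (fun y hy => by
        show 1 ≤ 2 * m - (G.neighborFinset b ∩ G.neighborFinset y).card
        have := t_lt hdeg (Finset.mem_sdiff.1 hy).1
        omega)
    rw [h1] at this
    simpa [smul_eq_mul] using this
  have hWle : W.card ≤ 2 * m := by
    have := Finset.card_le_card hWsub
    rw [hdeg b] at this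
    exact this
  -- final contradiction
  have e4 : W.card * (K.card + 1) = W.card * K.card + W.card := by ring
  have e5 : 2 * φ r' ≤ K.card * φ r' := Nat.mul_le_mul hk2 le_rfl
  have e6 := hlemA r' hr'Nv hr'K
  have e7 : W.card * 2 ≤ W.card * K.card := Nat.mul_le_mul le_rfl hk2
  omega


lemma phi_sum (hm : 2 ≤ m) (hdeg : ∀ x : V, (G.neighborFinset x).card = 2 * m)
    (hsum : ∀ x : V, ∑ w ∈ G.neighborFinset x,
      (G.neighborFinset x ∩ G.neighborFinset w).card = 2 * (2 * m * (m - 1)))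
    (v : V) :
    ∑ w ∈ G.neighborFinset v, ((G.neighborFinset v \ G.neighborFinset w).erase w).card
      = 2 * m := by
  have h1 : ∑ w ∈ G.neighborFinset v,
      ((G.neighborFinset v ∩ G.neighborFinset w).card
        + (((G.neighborFinset v \ G.neighborFinset w).erase w).card + 1)) = 2 * m * (2 * m) := by
    rw [Finset.sum_congr rfl (fun w hw => by rw [← add_assoc, phi_eq hdeg hw])]
    rw [Finset.sum_const, hdeg v, smul_eq_mul]
  rw [Finset.sum_add_distrib, Finset.sum_add_distrib, Finset.sum_const, hdeg v,
    smul_eq_mul, mul_one, hsum v, ← arith1 hm] at h1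
  omega

lemma twin_of_phi_zero (hdeg : ∀ x : V, (G.neighborFinset x).card = 2 * m) {v w : V}
    (hw : w ∈ G.neighborFinset v)
    (h0 : ((G.neighborFinset v \ G.neighborFinset w).erase w).card = 0) :
    insert w (G.neighborFinset w) = insert v (G.neighborFinset v) := by
  have hsub : insert v (G.neighborFinset v) ⊆ insert w (G.neighborFinset w) := by
    intro x hx
    by_cases hxw : x = w
    · exact hxw ▸ Finset.mem_insert_self _ _
    · apply Finset.mem_insert_of_mem
      rw [mem_neighborFinset]
      rcases Finset.mem_insert.1 hx with h | hx'
      · rw [h]; exact ((mem_neighborFinset G v w).1 hw).symm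
      · by_contra hadj
        have hmem : x ∈ (G.neighborFinset v \ G.neighborFinset w).erase w :=
          Finset.mem_erase.2 ⟨hxw, Finset.mem_sdiff.2
            ⟨hx', fun hc => hadj ((mem_neighborFinset G w x).1 hc)⟩⟩
        rw [Finset.card_eq_zero.1 h0] at hmem
        exact absurd hmem (Finset.notMem_empty x)
  have hc1 : (insert v (G.neighborFinset v)).card = 2 * m + 1 := by
    rw [Finset.card_insert_of_notMem (G.notMem_neighborFinset_self v), hdeg v]
  have hc2 : (insert w (G.neighborFinset w)).card = 2 * m + 1 := by
    rw [Finset.card_insert_of_notMem (G.notMem_neighborFinset_self w), hdeg w]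
  exact (Finset.eq_of_subset_of_card_le hsub (by omega)).symm

lemma phi_one (hm : 2 ≤ m) (hdeg : ∀ x : V, (G.neighborFinset x).card = 2 * m)
    (hsum : ∀ x : V, ∑ w ∈ G.neighborFinset x,
      (G.neighborFinset x ∩ G.neighborFinset w).card = 2 * (2 * m * (m - 1)))
    {v w : V} (hw : w ∈ G.neighborFinset v) :
    ((G.neighborFinset v \ G.neighborFinset w).erase w).card = 1 := by
  have hpos : ∀ u ∈ G.neighborFinset v,
      1 ≤ ((G.neighborFinset v \ G.neighborFinset u).erase u).card := by
    intro u hu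
    rcases Nat.eq_zero_or_pos ((G.neighborFinset v \ G.neighborFinset u).erase u).card with h | h
    · exfalso
      have hune : u ≠ v := fun hc => G.notMem_neighborFinset_self v (hc ▸ hu)
      exact no_twins hm hdeg hsum hune (twin_of_phi_zero hdeg hu h)
    · exact h
  by_contra hne
  have h2 : 2 ≤ ((G.neighborFinset v \ G.neighborFinset w).erase w).card := by
    have := hpos w hw
    omega
  have hs := phi_sum hm hdeg hsum v
  have hs2 := Finset.sum_erase_add (G.neighborFinset v)
    (fun u => ((G.neighborFinset v \ G.neighborFinset u).erase u).card) hw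
  have hlow : ((G.neighborFinset v).erase w).card * 1
      ≤ ∑ u ∈ (G.neighborFinset v).erase w,
        ((G.neighborFinset v \ G.neighborFinset u).erase u).card := by
    have := Finset.card_nsmul_le_sum ((G.neighborFinset v).erase w)
      (fun u => ((G.neighborFinset v \ G.neighborFinset u).erase u).card) 1
      (fun u hu => hpos u (Finset.mem_of_mem_erase hu))
    simpa [smul_eq_mul] using this
  have hec : ((G.neighborFinset v).erase w).card = 2 * m - 1 := by
    rw [Finset.card_erase_of_mem hw, hdeg v]
  beta_reduce at hs2
  rw [hs] at hs2
  rw [hec, mul_one] at hlow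
  omega

lemma card_V (hm : 2 ≤ m) (hdeg : ∀ x : V, (G.neighborFinset x).card = 2 * m)
    (hsum : ∀ x : V, ∑ w ∈ G.neighborFinset x,
      (G.neighborFinset x ∩ G.neighborFinset w).card = 2 * (2 * m * (m - 1)))
    (hconn : G.Connected) : Fintype.card V = 2 * m + 2 := by
  have hne : Nonempty V := hconn.nonempty
  obtain ⟨v⟩ := hne
  set M : Finset V := insert v (G.neighborFinset v) with hM
  have hNvM : G.neighborFinset v ⊆ M := Finset.subset_insert _ _
  have hvNv : v ∉ G.neighborFinset v := G.notMem_neighborFinset_self v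
  have houts : ∀ w ∈ G.neighborFinset v, (G.neighborFinset w \ M).card = 1 := by
    intro w hw
    rw [hM, outside_card hdeg hw]
    exact phi_one hm hdeg hsum hw
  -- the core propagation step
  have hcore : ∀ w ∈ G.neighborFinset v, ∀ u ∈ G.neighborFinset v, u ≠ w →
      G.Adj w u → G.neighborFinset w \ M = G.neighborFinset u \ M := by
    intro w hw u hu hne hadj
    obtain ⟨x, hx⟩ := Finset.card_eq_one.1 (houts w hw)
    obtain ⟨y, hy⟩ := Finset.card_eq_one.1 (houts u hu)
    have hxmem : x ∈ G.neighborFinset w \ M := by rw [hx]; exact Finset.mem_singleton_self x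
    have hxNw : x ∈ G.neighborFinset w := (Finset.mem_sdiff.1 hxmem).1
    have hxM : x ∉ M := (Finset.mem_sdiff.1 hxmem).2
    -- q : the partner of u in N v
    obtain ⟨p, hp⟩ := Finset.card_eq_one.1 (phi_one hm hdeg hsum hu)
    have hpmem : p ∈ (G.neighborFinset v \ G.neighborFinset u).erase u := by
      rw [hp]; exact Finset.mem_singleton_self p
    have hpu : p ≠ u := (Finset.mem_erase.1 hpmem).1
    have hpNv : p ∈ G.neighborFinset v := (Finset.mem_sdiff.1 (Finset.mem_of_mem_erase hpmem)).1
    have hpNu : p ∉ G.neighborFinset u := (Finset.mem_sdiff.1 (Finset.mem_of_mem_erase hpmem)).2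
    have hpw : p ≠ w := by
      intro hc
      rw [hc] at hpNu
      exact hpNu ((mem_neighborFinset G u w).2 hadj.symm)
    have hpNw : p ∈ G.neighborFinset w := by
      by_contra hnot
      obtain ⟨s, hsq⟩ := Finset.card_eq_one.1 (phi_one hm hdeg hsum hpNv)
      have hu_in : u ∈ (G.neighborFinset v \ G.neighborFinset p).erase p := by
        refine Finset.mem_erase.2 ⟨fun hc => hpu hc.symm, Finset.mem_sdiff.2 ⟨hu, ?_⟩⟩
        intro hc
        exact hpNu ((mem_neighborFinset G u p).2 ((mem_neighborFinset G p u).1 hc).symm)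
      have hw_in : w ∈ (G.neighborFinset v \ G.neighborFinset p).erase p := by
        refine Finset.mem_erase.2 ⟨fun hc => hpw hc.symm, Finset.mem_sdiff.2 ⟨hw, ?_⟩⟩
        intro hc
        exact hnot ((mem_neighborFinset G w p).2 ((mem_neighborFinset G p w).1 hc).symm)
      rw [hsq] at hu_in hw_in
      exact hne ((Finset.mem_singleton.1 hu_in).trans (Finset.mem_singleton.1 hw_in).symm)
    -- partner of u inside N w is p
    have huNw : u ∈ G.neighborFinset w := (mem_neighborFinset G w u).2 hadj
    obtain ⟨p', hp'⟩ := Finset.card_eq_one.1 (phi_one hm hdeg hsum huNw)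
    have hp_in : p ∈ (G.neighborFinset w \ G.neighborFinset u).erase u :=
      Finset.mem_erase.2 ⟨hpu, Finset.mem_sdiff.2 ⟨hpNw, hpNu⟩⟩
    rw [hp'] at hp_in
    have hpp' : p = p' := Finset.mem_singleton.1 hp_in
    -- x must be adjacent to u
    have hxNu : x ∈ G.neighborFinset u := by
      by_contra hnot
      have hxu : x ≠ u := fun hc => hxM (hc ▸ hNvM hu)
      have : x ∈ (G.neighborFinset w \ G.neighborFinset u).erase u :=
        Finset.mem_erase.2 ⟨hxu, Finset.mem_sdiff.2 ⟨hxNw, hnot⟩⟩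
      rw [hp'] at this
      have : x = p' := Finset.mem_singleton.1 this
      rw [this, ← hpp'] at hxM
      exact hxM (hNvM hpNv)
    have hxin : x ∈ G.neighborFinset u \ M := Finset.mem_sdiff.2 ⟨hxNu, hxM⟩
    rw [hy] at hxin
    rw [hx, hy, Finset.mem_singleton.1 hxin]
  -- all outside singletons coincide
  have hNvne : (G.neighborFinset v).Nonempty := by
    rw [← Finset.card_pos, hdeg v]; omega
  obtain ⟨w0, hw0⟩ := hNvne
  have hall : ∀ w ∈ G.neighborFinset v,
      G.neighborFinset w \ M = G.neighborFinset w0 \ M := by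
    intro w hw
    by_cases hww0 : w = w0
    · rw [hww0]
    · by_cases hadj : G.Adj w0 w
      · exact (hcore w0 hw0 w hw hww0 hadj).symm
      · -- w is the partner of w0 : pick an intermediate u
        have hwNw0 : w ∉ G.neighborFinset w0 := fun hc => hadj ((mem_neighborFinset G w0 w).1 hc)
        have hw0Nw : w0 ∉ G.neighborFinset w := fun hc =>
          hadj (((mem_neighborFinset G w w0).1 hc).symm)
        obtain ⟨pw0, hpw0⟩ := Finset.card_eq_one.1 (phi_one hm hdeg hsum hw0)
        obtain ⟨pw, hpw⟩ := Finset.card_eq_one.1 (phi_one hm hdeg hsum hw)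
        have hwp : w = pw0 := by
          have : w ∈ (G.neighborFinset v \ G.neighborFinset w0).erase w0 :=
            Finset.mem_erase.2 ⟨hww0, Finset.mem_sdiff.2 ⟨hw, hwNw0⟩⟩
          rw [hpw0] at this
          exact Finset.mem_singleton.1 this
        have hw0p : w0 = pw := by
          have : w0 ∈ (G.neighborFinset v \ G.neighborFinset w).erase w :=
            Finset.mem_erase.2 ⟨fun hc => hww0 hc.symm, Finset.mem_sdiff.2 ⟨hw0, hw0Nw⟩⟩
          rw [hpw] at this
          exact Finset.mem_singleton.1 this
        have hex : ∃ u ∈ G.neighborFinset v, u ≠ w0 ∧ u ≠ w := by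
          have hcard : 2 ≤ ((G.neighborFinset v).erase w0).card := by
            rw [Finset.card_erase_of_mem hw0, hdeg v]; omega
          have : (((G.neighborFinset v).erase w0).erase w).Nonempty := by
            rw [← Finset.card_pos, Finset.card_erase_of_mem
              (Finset.mem_erase.2 ⟨hww0, hw⟩)]
            omega
          obtain ⟨u, hu⟩ := this
          exact ⟨u, Finset.mem_of_mem_erase (Finset.mem_of_mem_erase hu),
            (Finset.mem_erase.1 (Finset.mem_of_mem_erase hu)).1,
            (Finset.mem_erase.1 hu).1⟩
        obtain ⟨u, huNv, huw0, huw⟩ := hex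
        have hadjw0u : G.Adj w0 u := by
          by_contra hnot
          have : u ∈ (G.neighborFinset v \ G.neighborFinset w0).erase w0 :=
            Finset.mem_erase.2 ⟨huw0, Finset.mem_sdiff.2
              ⟨huNv, fun hc => hnot ((mem_neighborFinset G w0 u).1 hc)⟩⟩
          rw [hpw0] at this
          exact huw ((Finset.mem_singleton.1 this).trans hwp.symm)
        have hadjwu : G.Adj w u := by
          by_contra hnot
          have : u ∈ (G.neighborFinset v \ G.neighborFinset w).erase w :=
            Finset.mem_erase.2 ⟨huw, Finset.mem_sdiff.2
              ⟨huNv, fun hc => hnot ((mem_neighborFinset G w u).1 hc)⟩⟩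
          rw [hpw] at this
          exact huw0 ((Finset.mem_singleton.1 this).trans hw0p.symm)
        calc G.neighborFinset w \ M = G.neighborFinset u \ M :=
              hcore w hw u huNv huw hadjwu
          _ = G.neighborFinset w0 \ M :=
              (hcore w0 hw0 u huNv huw0 hadjw0u).symm
  obtain ⟨xb, hxb⟩ := Finset.card_eq_one.1 (houts w0 hw0)
  have hxbmem : xb ∈ G.neighborFinset w0 \ M := by rw [hxb]; exact Finset.mem_singleton_self xb
  have hxbM : xb ∉ M := (Finset.mem_sdiff.1 hxbmem).2
  have hxbN : ∀ w ∈ G.neighborFinset v, xb ∈ G.neighborFinset w := by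
    intro w hw
    have h1 : xb ∈ G.neighborFinset w \ M := by
      rw [hall w hw, hxb]; exact Finset.mem_singleton_self xb
    exact (Finset.mem_sdiff.1 h1).1
  have hNxb : G.neighborFinset xb = G.neighborFinset v := by
    refine (Finset.eq_of_subset_of_card_le (fun w hw => ?_) (by rw [hdeg, hdeg])).symm
    exact (mem_neighborFinset G xb w).2 ((mem_neighborFinset G w xb).1 (hxbN w hw)).symm
  -- closure
  set F : Finset V := insert xb M with hF
  have hMF : M ⊆ F := Finset.subset_insert _ _
  have hclosure : ∀ z ∈ F, ∀ x ∈ G.neighborFinset z, x ∈ F := by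
    intro z hz x hx
    rcases Finset.mem_insert.1 hz with rfl | hzM
    · rw [hNxb] at hx
      exact hMF (hNvM hx)
    · rcases Finset.mem_insert.1 hzM with rfl | hzNv
      · exact hMF (hNvM hx)
      · by_cases hxM : x ∈ M
        · exact hMF hxM
        · have : x ∈ G.neighborFinset z \ M := Finset.mem_sdiff.2 ⟨hx, hxM⟩
          rw [hall z hzNv, hxb] at this
          rw [Finset.mem_singleton.1 this]
          exact Finset.mem_insert_self _ _
  have hreach : ∀ y : V, y ∈ F := by
    intro y
    obtain ⟨p⟩ := hconn.preconnected v y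
    have key : ∀ (a c : V), G.Walk a c → a ∈ F → c ∈ F := by
      intro a c p
      induction p with
      | nil => exact id
      | cons h q ih =>
        intro ha
        exact ih (hclosure _ ha _ ((mem_neighborFinset _ _ _).2 h))
    exact key v y p (hMF (Finset.mem_insert_self _ _))
  have huniv : (Finset.univ : Finset V) = F := by
    apply Finset.Subset.antisymm
    · intro y _; exact hreach y
    · intro y _; exact Finset.mem_univ y
  have hFc : F.card = 2 * m + 2 := by
    rw [hF, Finset.card_insert_of_notMem (fun hc => hxbM hc), hM,
      Finset.card_insert_of_notMem hvNv, hdeg v]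
  rw [← Finset.card_univ, huniv, hFc]


lemma exists_transversal {α : Type*} [DecidableEq α] (q : α → α) (hqinv : ∀ a, q (q a) = a)
    (hqne : ∀ a, q a ≠ a) :
    ∀ (n : ℕ) (T : Finset α), T.card = n → (∀ a ∈ T, q a ∈ T) →
      ∃ S : Finset α, S ⊆ T ∧ (∀ a ∈ T, (a ∈ S ↔ q a ∉ S)) ∧ 2 * S.card = T.card := by
  intro n
  induction n using Nat.strong_induction_on with
  | _ n ih =>
    intro T hTc hTq
    rcases T.eq_empty_or_nonempty with rfl | ⟨a, ha⟩
    · refine ⟨∅, Finset.Subset.refl _, ?_, by simp⟩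
      intro a ha
      exact absurd ha (Finset.notMem_empty a)
    · have hqa : q a ∈ T := hTq a ha
      have hqaea : q a ∈ T.erase a := Finset.mem_erase.2 ⟨hqne a, hqa⟩
      set T' : Finset α := (T.erase a).erase (q a) with hT'
      have hT'c : T'.card = n - 2 := by
        rw [hT', Finset.card_erase_of_mem hqaea, Finset.card_erase_of_mem ha, hTc]
        omega
      have hcard2 : 2 ≤ n := by
        have : ({a, q a} : Finset α) ⊆ T := by
          intro x hx
          rcases Finset.mem_insert.1 hx with rfl | hx
          · exact ha
          · rw [Finset.mem_singleton.1 hx]; exact hqa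
        have := Finset.card_le_card this
        rw [Finset.card_pair (fun hc => hqne a hc.symm), hTc] at this
        exact this
      have hn2 : n - 2 < n := by omega
      have hT'q : ∀ b ∈ T', q b ∈ T' := by
        intro b hb
        have hbT : b ∈ T := Finset.mem_of_mem_erase (Finset.mem_of_mem_erase hb)
        have hbqa : b ≠ q a := (Finset.mem_erase.1 hb).1
        have hba : b ≠ a := (Finset.mem_erase.1 (Finset.mem_of_mem_erase hb)).1
        refine Finset.mem_erase.2 ⟨?_, Finset.mem_erase.2 ⟨?_, hTq b hbT⟩⟩
        · intro hc
          exact hba (by rw [← hqinv b, hc, hqinv])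
        · intro hc
          exact hbqa (by rw [← hqinv b, hc])
      obtain ⟨S', hS'sub, hS'iff, hS'c⟩ := ih (n - 2) hn2 T' hT'c hT'q
      have hqaS' : q a ∉ S' := fun hc => (Finset.mem_erase.1 (hS'sub hc)).1 rfl
      have haS' : a ∉ S' := fun hc =>
        (Finset.mem_erase.1 (Finset.mem_of_mem_erase (hS'sub hc))).1 rfl
      refine ⟨insert a S', ?_, ?_, ?_⟩
      · intro x hx
        rcases Finset.mem_insert.1 hx with rfl | hx
        · exact ha
        · exact Finset.mem_of_mem_erase (Finset.mem_of_mem_erase (hS'sub hx))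
      · intro b hbT
        by_cases hb1 : b = a
        · subst hb1
          constructor
          · intro _ hc
            rcases Finset.mem_insert.1 hc with hc | hc
            · exact hqne b hc
            · exact hqaS' hc
          · intro _
            exact Finset.mem_insert_self _ _
        · by_cases hb2 : b = q a
          · subst hb2
            rw [hqinv]
            constructor
            · intro hc
              exfalso
              rcases Finset.mem_insert.1 hc with hc | hc
              · exact hqne a hc
              · exact hqaS' hc
            · intro hc
              exact absurd (Finset.mem_insert_self a S') hc
          · have hbT' : b ∈ T' := Finset.mem_erase.2 ⟨hb2, Finset.mem_erase.2 ⟨hb1, hbT⟩⟩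
            have hqba : q b ≠ a := fun hc => hb2 (by rw [← hqinv b, hc])
            constructor
            · intro hc hd
              have hb' : b ∈ S' := by
                rcases Finset.mem_insert.1 hc with hc | hc
                · exact absurd hc hb1
                · exact hc
              rcases Finset.mem_insert.1 hd with hd | hd
              · exact hqba hd
              · exact (hS'iff b hbT').1 hb' hd
            · intro hc
              apply Finset.mem_insert_of_mem
              rw [hS'iff b hbT']
              intro hd
              exact hc (Finset.mem_insert_of_mem hd)
      · rw [Finset.card_insert_of_notMem haS', hTc]
        omega

end Stmt17

theorem stmt17 {V : Type*} [Fintype V] (m : ℕ) (hm : 2 ≤ m) (G : SimpleGraph V)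
    (hconn : G.Connected) (h : HasParams G (2 * m) (2 * m * (m - 1))) :
    Nonempty (G ≃g SimpleGraph.turanGraph (2 * m + 2) (m + 1)) := by
  classical
  have hdeg : ∀ x : V, (G.neighborFinset x).card = 2 * m := by
    intro x
    have h1 := (h x).1
    rw [Stmt17.deg_eq] at h1
    exact h1
  have hsum : ∀ x : V, ∑ w ∈ G.neighborFinset x,
      (G.neighborFinset x ∩ G.neighborFinset w).card = 2 * (2 * m * (m - 1)) := by
    intro x
    rw [Stmt17.doubling, (h x).2]
  have hcard := Stmt17.card_V hm hdeg hsum hconn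
  -- the unique non-neighbour q z of each vertex z
  have hq1 : ∀ z : V, (Finset.univ \ insert z (G.neighborFinset z)).card = 1 := by
    intro z
    rw [Finset.card_sdiff_of_subset (Finset.subset_univ _), Finset.card_univ, hcard,
      Finset.card_insert_of_notMem (G.notMem_neighborFinset_self z), hdeg z]
    omega
  have hqex : ∀ z : V, ∃ y, Finset.univ \ insert z (G.neighborFinset z) = {y} :=
    fun z => Finset.card_eq_one.1 (hq1 z)
  choose q hq using hqex
  have hqprop : ∀ z, q z ∉ insert z (G.neighborFinset z) := by
    intro z
    have hmem : q z ∈ Finset.univ \ insert z (G.neighborFinset z) := by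
      rw [hq z]; exact Finset.mem_singleton_self _
    exact (Finset.mem_sdiff.1 hmem).2
  have hqz : ∀ z, q z ≠ z := fun z hc =>
    hqprop z (by rw [hc]; exact Finset.mem_insert_self _ _)
  have hqnadj : ∀ z, ¬ G.Adj z (q z) := fun z hc =>
    hqprop z (Finset.mem_insert_of_mem ((mem_neighborFinset G z (q z)).2 hc))
  have hadj_iff : ∀ z y : V, G.Adj z y ↔ (y ≠ z ∧ y ≠ q z) := by
    intro z y
    constructor
    · intro hzy
      exact ⟨fun hc => G.irrefl (hc ▸ hzy), fun hc => hqnadj z (hc ▸ hzy)⟩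
    · rintro ⟨h1, h2⟩
      have hns : y ∉ Finset.univ \ insert z (G.neighborFinset z) := by
        rw [hq z]
        exact fun hc => h2 (Finset.mem_singleton.1 hc)
      have hy : y ∈ insert z (G.neighborFinset z) := by
        by_contra hcc
        exact hns (Finset.mem_sdiff.2 ⟨Finset.mem_univ y, hcc⟩)
      rcases Finset.mem_insert.1 hy with hc | hc
      · exact absurd hc h1
      · exact (mem_neighborFinset G z y).1 hc
  have hqinv : ∀ z, q (q z) = z := by
    intro z
    have hmem : z ∈ Finset.univ \ insert (q z) (G.neighborFinset (q z)) := by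
      refine Finset.mem_sdiff.2 ⟨Finset.mem_univ z, ?_⟩
      intro hc
      rcases Finset.mem_insert.1 hc with hc | hc
      · exact hqz z hc.symm
      · exact hqnadj z (((mem_neighborFinset G (q z) z).1 hc).symm)
    rw [hq (q z)] at hmem
    exact (Finset.mem_singleton.1 hmem).symm
  obtain ⟨S, hSsub, hSiff, hScard⟩ := Stmt17.exists_transversal q hqinv hqz
    (Fintype.card V) Finset.univ (by rw [Finset.card_univ]) (fun a _ => Finset.mem_univ _)
  have hScard' : S.card = m + 1 := by
    rw [Finset.card_univ, hcard] at hScard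
    omega
  have hqS : ∀ z : V, z ∉ S → q z ∈ S := by
    intro z hz
    have := hSiff z (Finset.mem_univ z)
    tauto
  have hSq : ∀ z : V, z ∈ S → q z ∉ S := fun z hz => (hSiff z (Finset.mem_univ z)).1 hz
  have e0 : ↥S ≃ Fin (m + 1) :=
    Fintype.equivFinOfCardEq (by rw [Fintype.card_coe]; exact hScard')
  set rep : V → ↥S := fun z => if hz : z ∈ S then ⟨z, hz⟩ else ⟨q z, hqS z hz⟩ with hrep
  have hrepval : ∀ z : V, (rep z).val = if z ∈ S then z else q z := by
    intro z
    by_cases hz : z ∈ S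
    · rw [hrep]; simp [hz]
    · rw [hrep]; simp [hz]
  set g : V → Fin (2 * m + 2) := fun z =>
    ⟨(e0 (rep z)).val + (if z ∈ S then 0 else (m + 1)), by
      have h1 := (e0 (rep z)).isLt
      split_ifs <;> omega⟩ with hg
  have hgval : ∀ z : V, (g z).val = (e0 (rep z)).val + (if z ∈ S then 0 else (m + 1)) := by
    intro z; rw [hg]
  have hmod : ∀ z : V, (g z).val % (m + 1) = (e0 (rep z)).val := by
    intro z
    have h1 := (e0 (rep z)).isLt
    rw [hgval z]
    by_cases hz : z ∈ S
    · rw [if_pos hz, Nat.add_zero, Nat.mod_eq_of_lt h1]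
    · rw [if_neg hz, Nat.add_mod_right, Nat.mod_eq_of_lt h1]
  have hrep_iff : ∀ z y : V, rep z = rep y ↔ (y = z ∨ y = q z) := by
    intro z y
    constructor
    · intro hr
      have hval := congrArg Subtype.val hr
      rw [hrepval z, hrepval y] at hval
      by_cases hz : z ∈ S <;> by_cases hy : y ∈ S
      · rw [if_pos hz, if_pos hy] at hval; exact Or.inl hval.symm
      · rw [if_pos hz, if_neg hy] at hval
        right
        rw [hval, hqinv]
      · rw [if_neg hz, if_pos hy] at hval
        exact Or.inr hval.symm
      · rw [if_neg hz, if_neg hy] at hval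
        left
        rw [← hqinv y, ← hval, hqinv]
    · intro hr
      rcases hr with rfl | rfl
      · rfl
      · apply Subtype.ext
        rw [hrepval, hrepval]
        by_cases hz : z ∈ S
        · rw [if_pos hz, if_neg (hSq z hz), hqinv]
        · rw [if_neg hz, if_pos (hqS z hz)]
  have hginj : Function.Injective g := by
    intro z y hzy
    have hval := congrArg Fin.val hzy
    rw [hgval z, hgval y] at hval
    have h1 := (e0 (rep z)).isLt
    have h2 := (e0 (rep y)).isLt
    have hss : z ∈ S ↔ y ∈ S := by
      by_cases hz : z ∈ S <;> by_cases hy : y ∈ S <;>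
        simp only [hz, hy, if_pos, if_neg, if_true, if_false] at hval ⊢ <;> first | tauto | omega
    have hvv : (e0 (rep z)).val = (e0 (rep y)).val := by
      by_cases hz : z ∈ S
      · have hy := hss.1 hz
        rw [if_pos hz, if_pos hy] at hval; omega
      · have hy := fun hc => hz (hss.2 hc)
        rw [if_neg hz, if_neg hy] at hval; omega
    have hre : rep z = rep y := e0.injective (Fin.val_inj.1 hvv)
    rcases (hrep_iff z y).1 hre with rfl | rfl
    · rfl
    · exfalso
      by_cases hz : z ∈ S
      · exact hSq z hz (hss.1 hz)
      · exact hz (hss.2 (hqS z hz))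
  have hbij : Function.Bijective g :=
    (Fintype.bijective_iff_injective_and_card g).2
      ⟨hginj, by rw [hcard, Fintype.card_fin]⟩
  refine ⟨⟨Equiv.ofBijective g hbij, ?_⟩⟩
  intro a b
  show (↑(g a) % (m + 1) ≠ ↑(g b) % (m + 1)) ↔ G.Adj a b
  rw [hmod a, hmod b, hadj_iff a b]
  constructor
  · intro hne
    constructor
    · rintro rfl
      exact hne rfl
    · rintro rfl
      exact hne (congrArg (fun t => (e0 t).val) ((hrep_iff a (q a)).2 (Or.inr rfl)))
  · rintro ⟨h1, h2⟩ hval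
    have hre : rep a = rep b := e0.injective (Fin.val_inj.1 hval)
    rcases (hrep_iff a b).1 hre with rfl | rfl
    · exact h1 rfl
    · exact h2 rfl
end
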